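/- arXiv:0804.3690 — 7 statements merged into one kernel-verified Lean document; each statement's English description precedes it below -/
import Mathlib

section
/- Let G be a graph obtained by pasting graphs G1 and G2 on a vertex v, i.e., G = G1 ∪ G2 and V(G1) ∩ V(G2) = {v}. Then: (a) if ddn(G1) = ddn(G2) = 1 then ddn(G) = 1; and (b) if dn(G1) = dn(G2) = 1 then dn(G) = 1. -/
noncomputable section

/-- The Euclidean plane. -/
abbrev Plane : Type := EuclideanSpace ℝ (Fin 2)

/-- The set of edge-lengths determined by a map `f` of the vertices of `G` to the plane. -/
def SimpleGraph.edgeLengths {V : Type*} (G : SimpleGraph V) (f : V → Plane) : Set ℝ :=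
  {d : ℝ | ∃ u v : V, G.Adj u v ∧ Dist.dist (f u) (f v) = d}

/-- A degenerate drawing of `G`: an injective map from the vertices to the plane. -/
def SimpleGraph.IsDegenDrawing {V : Type*} (_G : SimpleGraph V) (f : V → Plane) : Prop :=
  Function.Injective f

/-- A drawing of `G`: a degenerate drawing such that no vertex lies on the open segment
representing an edge. -/
def SimpleGraph.IsDrawing {V : Type*} (G : SimpleGraph V) (f : V → Plane) : Prop :=
  Function.Injective f ∧ ∀ u v w : V, G.Adj u v → f w ∉ openSegment ℝ (f u) (f v)

/-- The degenerate distance-number of `G`: the minimum number of distinct edge-lengths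
in a degenerate drawing of `G`. -/
def SimpleGraph.ddn {V : Type*} (G : SimpleGraph V) : ℕ :=
  sInf {k : ℕ | ∃ f : V → Plane, G.IsDegenDrawing f ∧ (G.edgeLengths f).ncard = k}

/-- The distance-number of `G`: the minimum number of distinct edge-lengths
in a drawing of `G`. -/
def SimpleGraph.dn {V : Type*} (G : SimpleGraph V) : ℕ :=
  sInf {k : ℕ | ∃ f : V → Plane, G.IsDrawing f ∧ (G.edgeLengths f).ncard = k}

/-!
Take drawings of `G[A]` and `G[B]` whose edges all have length `d₁`, resp. `d₂`. Scale the second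
one by `d₁ / d₂` and move it so that the two images of `v` coincide; it may still be rotated freely
about `v`. A circle meets a segment in at most two points, so only finitely many rotations put a
vertex of one part on a closed segment between two vertices of the other part, and any other
rotation glues the two drawings into a (degenerate) drawing of `G` with the single edge length `d₁`.
-/

open Set Function

theorem finite_setOf_norm_add_smul_eq {E : Type*} [NormedAddCommGroup E] [InnerProductSpace ℝ E]
    (x : E) {y : E} (hy : y ≠ 0) (r : ℝ) : {t : ℝ | ‖x + t • y‖ = r}.Finite := by
  open Polynomial in
  have hq : C (‖y‖ ^ 2) * X ^ 2 + C (2 * inner ℝ x y) * X + C (‖x‖ ^ 2 - r ^ 2) ≠ 0 :=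
    ne_zero_of_natDegree_gt (n := 1) <| by
      rw [natDegree_quadratic (by positivity)]; norm_num
  refine (finite_setOfPred_isRoot hq).subset fun t ht => ?_
  have h : ‖x + t • y‖ ^ 2 = r ^ 2 := by rw [ht]
  simp only [norm_add_sq_real, inner_smul_right, norm_smul, mul_pow, Real.norm_eq_abs, sq_abs] at h
  simp only [mem_ofPred_eq, Polynomial.IsRoot, Polynomial.eval_add, Polynomial.eval_mul,
    Polynomial.eval_C, Polynomial.eval_pow, Polynomial.eval_X]
  linear_combination h

theorem finite_sphere_inter_segment {E : Type*} [NormedAddCommGroup E] [InnerProductSpace ℝ E]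
    (p : E) (r : ℝ) (y y' : E) : (Metric.sphere p r ∩ segment ℝ y y').Finite := by
  rcases eq_or_ne y y' with rfl | hyy'
  · rw [segment_same]
    exact (finite_singleton y).subset inter_subset_right
  · rw [segment_eq_image']
    refine ((finite_setOf_norm_add_smul_eq (y - p) (sub_ne_zero.2 hyy'.symm) r).image
      fun t => y + t • (y' - y)).subset ?_
    rintro _ ⟨hz, t, -, rfl⟩
    refine ⟨t, ?_, rfl⟩
    rw [mem_sphere_iff_norm, add_sub_right_comm] at hz
    exact hz

theorem Complex.infinite_sphere_zero {s : ℝ} (hs : 0 < s) : (Metric.sphere (0 : ℂ) s).Infinite :=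
  have hrank : 1 < Module.rank ℝ ℂ := by rw [Complex.rank_real_complex]; norm_num
  (isConnected_sphere hrank 0 hs.le).isPreconnected.infinite_of_nontrivial
    ⟨s, by simp [hs.le], -s, by simp [hs.le], by
      rw [Ne, ← Complex.ofReal_neg, Complex.ofReal_inj]; linarith⟩

def complexMul (c : ℂ) : Plane →ₗ[ℝ] Plane :=
  Complex.orthonormalBasisOneI.repr.toLinearMap ∘ₗ LinearMap.mulLeft ℝ c ∘ₗ
    Complex.orthonormalBasisOneI.repr.symm.toLinearMap

theorem complexMul_apply (c : ℂ) (x : Plane) :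
    complexMul c x =
      Complex.orthonormalBasisOneI.repr (c * Complex.orthonormalBasisOneI.repr.symm x) :=
  rfl

theorem norm_complexMul (c : ℂ) (x : Plane) : ‖complexMul c x‖ = ‖c‖ * ‖x‖ := by
  simp only [complexMul_apply, LinearIsometryEquiv.norm_map, norm_mul]

theorem complexMul_complexMul (c c' : ℂ) (x : Plane) :
    complexMul c (complexMul c' x) = complexMul (c * c') x := by
  simp only [complexMul_apply, LinearIsometryEquiv.symm_apply_apply, mul_assoc]

theorem complexMul_one (x : Plane) : complexMul 1 x = x := by
  simp only [complexMul_apply, one_mul, LinearIsometryEquiv.apply_symm_apply]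

theorem complexMul_left_injective {x : Plane} (hx : x ≠ 0) :
    Injective fun c => complexMul c x := by
  intro c c' h
  refine mul_right_cancel₀ ?_ (Complex.orthonormalBasisOneI.repr.injective h)
  exact Complex.orthonormalBasisOneI.repr.symm.map_ne_zero_iff.2 hx

def spiralSimilarity (c : ℂ) (q p : Plane) : Plane →ᵃ[ℝ] Plane :=
  AffineMap.mk' (fun x => p + complexMul c (x - q)) (complexMul c) q fun x => by
    simp [add_comm]

theorem spiralSimilarity_apply (c : ℂ) (q p x : Plane) :
    spiralSimilarity c q p x = p + complexMul c (x - q) :=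
  rfl

theorem spiralSimilarity_apply_self (c : ℂ) (q p : Plane) : spiralSimilarity c q p q = p := by
  simp [spiralSimilarity_apply]

theorem dist_spiralSimilarity (c : ℂ) (q p x y : Plane) :
    dist (spiralSimilarity c q p x) (spiralSimilarity c q p y) = ‖c‖ * dist x y := by
  simp only [spiralSimilarity_apply, dist_eq_norm, add_sub_add_left_eq_sub, ← map_sub,
    sub_sub_sub_cancel_right, norm_complexMul]

theorem spiralSimilarity_inv_apply {c : ℂ} (hc : c ≠ 0) (q p x : Plane) :
    spiralSimilarity c⁻¹ p q (spiralSimilarity c q p x) = x := by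
  simp [spiralSimilarity_apply, complexMul_complexMul, hc, complexMul_one]

theorem spiralSimilarity_injective {c : ℂ} (hc : c ≠ 0) (q p : Plane) :
    Injective (spiralSimilarity c q p) :=
  LeftInverse.injective (spiralSimilarity_inv_apply hc q p)

theorem spiralSimilarity_inv_mem_segment {c : ℂ} (hc : c ≠ 0) {q p x x' y : Plane}
    (h : y ∈ segment ℝ (spiralSimilarity c q p x) (spiralSimilarity c q p x')) :
    spiralSimilarity c⁻¹ p q y ∈ segment ℝ x x' := by
  have := mem_image_of_mem (spiralSimilarity c⁻¹ p q) h
  rwa [image_segment, spiralSimilarity_inv_apply hc, spiralSimilarity_inv_apply hc] at this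

theorem finite_setOf_spiralSimilarity_mem_segment {q x : Plane} (hx : x ≠ q) (p y y' : Plane)
    (s : ℝ) : {c : ℂ | ‖c‖ = s ∧ spiralSimilarity c q p x ∈ segment ℝ y y'}.Finite := by
  have hinj : Injective fun c => spiralSimilarity c q p x :=
    (add_right_injective p).comp (complexMul_left_injective (sub_ne_zero.2 hx))
  refine ((finite_sphere_inter_segment p (s * ‖x - q‖) y y').preimage hinj.injOn).subset ?_
  rintro c ⟨hc, hmem⟩
  refine ⟨?_, hmem⟩
  change spiralSimilarity c q p x ∈ _
  rw [mem_sphere_iff_norm, spiralSimilarity_apply, add_sub_cancel_left, norm_complexMul, hc]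

theorem finite_setOf_exists_spiralSimilarity_mem_segment {P Q : Set Plane} (hP : P.Finite)
    (hQ : Q.Finite) (q p : Plane) (s : ℝ) :
    {c : ℂ | ‖c‖ = s ∧ ∃ x ∈ Q, x ≠ q ∧ ∃ y ∈ P, ∃ y' ∈ P,
      spiralSimilarity c q p x ∈ segment ℝ y y'}.Finite := by
  refine ((hQ.sdiff (t := {q})).biUnion fun x hx => hP.biUnion fun y _ => hP.biUnion fun y' _ =>
    finite_setOf_spiralSimilarity_mem_segment hx.2 p y y' s).subset ?_
  rintro c ⟨hc, x, hx, hxq, y, hy, y', hy', hmem⟩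
  simp only [mem_iUnion]
  exact ⟨x, ⟨hx, hxq⟩, y, hy, y', hy', hc, hmem⟩

theorem exists_spiralSimilarity_avoiding {P Q : Set Plane} (hP : P.Finite) (hQ : Q.Finite)
    (q p : Plane) {s : ℝ} (hs : 0 < s) :
    ∃ c : ℂ, ‖c‖ = s ∧
      (∀ x ∈ Q, x ≠ q → ∀ y ∈ P, ∀ y' ∈ P, spiralSimilarity c q p x ∉ segment ℝ y y') ∧
      (∀ y ∈ P, y ≠ p → ∀ x ∈ Q, ∀ x' ∈ Q,
        y ∉ segment ℝ (spiralSimilarity c q p x) (spiralSimilarity c q p x')) := by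
  -- The second condition is the first one for the inverse similarity, whose parameter is `c⁻¹`.
  obtain ⟨c, hc, hbad⟩ := ((Complex.infinite_sphere_zero hs).sdiff
    ((finite_setOf_exists_spiralSimilarity_mem_segment hP hQ q p s).union
      ((finite_setOf_exists_spiralSimilarity_mem_segment hQ hP p q s⁻¹).preimage
        inv_injective.injOn))).nonempty
  rw [mem_sphere_zero_iff_norm] at hc
  have hc0 : c ≠ 0 := norm_pos_iff.1 (hc ▸ hs)
  refine ⟨c, hc, ?_, ?_⟩
  · exact fun x hx hxq y hy y' hy' hmem => hbad (.inl ⟨hc, x, hx, hxq, y, hy, y', hy', hmem⟩)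
  · exact fun y hy hyp x hx x' hx' hmem => hbad (.inr ⟨by rw [norm_inv, hc], y, hy, hyp,
      x, hx, x', hx', spiralSimilarity_inv_mem_segment hc0 hmem⟩)

theorem AffineMap.mem_openSegment_map_iff {E F : Type*} [AddCommGroup E] [Module ℝ E]
    [AddCommGroup F] [Module ℝ F] {f : E →ᵃ[ℝ] F} (hf : Injective f) {x y z : E} :
    f x ∈ openSegment ℝ (f y) (f z) ↔ x ∈ openSegment ℝ y z := by
  rw [← image_openSegment, hf.mem_set_image]

theorem SimpleGraph.IsDrawing.comp_affineMap {V : Type*} {G : SimpleGraph V} {f : V → Plane}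
    (hf : G.IsDrawing f) {φ : Plane →ᵃ[ℝ] Plane} (hφ : Injective φ) : G.IsDrawing (φ ∘ f) :=
  ⟨hφ.comp hf.1, fun u w t hadj => by
    simpa only [comp_apply, AffineMap.mem_openSegment_map_iff hφ] using hf.2 u w t hadj⟩

def AvoidsSegments {V : Type*} (F : V → Plane) (S T : Set V) : Prop :=
  ∀ x ∈ S, ∀ y ∈ T, ∀ y' ∈ T, F x ∉ segment ℝ (F y) (F y')

namespace SimpleGraph

variable {V : Type*} {G : SimpleGraph V}

theorem edgeLengths_spiralSimilarity_comp (f : V → Plane) (c : ℂ) (q p : Plane) :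
    G.edgeLengths (spiralSimilarity c q p ∘ f) = (‖c‖ * ·) '' G.edgeLengths f := by
  ext d
  simp only [edgeLengths, mem_image, mem_ofPred_eq, comp_apply, dist_spiralSimilarity]
  constructor
  · rintro ⟨u, w, hadj, rfl⟩
    exact ⟨_, ⟨u, w, hadj, rfl⟩, rfl⟩
  · rintro ⟨_, ⟨u, w, hadj, rfl⟩, rfl⟩
    exact ⟨u, w, hadj, rfl⟩

theorem edgeLengths_finite [Finite V] (f : V → Plane) : (G.edgeLengths f).Finite :=
  (finite_range fun e : V × V => Dist.dist (f e.1) (f e.2)).subset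
    fun _ ⟨u, w, _, hd⟩ => ⟨(u, w), hd⟩

theorem pos_of_edgeLengths_eq_singleton {f : V → Plane} {d : ℝ} (hf : Injective f)
    (hd : G.edgeLengths f = {d}) : 0 < d := by
  obtain ⟨u, w, hadj, rfl⟩ : d ∈ G.edgeLengths f := hd ▸ rfl
  exact dist_pos.2 (hf.ne hadj.ne)

theorem exists_edgeLengths_eq_singleton_of_sInf_eq_one {P : (V → Plane) → Prop}
    (h : sInf {k : ℕ | ∃ f, P f ∧ (G.edgeLengths f).ncard = k} = 1) :
    ∃ f d, P f ∧ G.edgeLengths f = {d} := by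
  have hne : {k : ℕ | ∃ f, P f ∧ (G.edgeLengths f).ncard = k}.Nonempty :=
    nonempty_iff_ne_empty.2 fun h' => by simp [h'] at h
  obtain ⟨f, hf, hcard⟩ := h ▸ Nat.sInf_mem hne
  obtain ⟨d, hd⟩ := ncard_eq_one.1 hcard
  exact ⟨f, d, hf, hd⟩

theorem sInf_ncard_edgeLengths_eq_one [Finite V] {P : (V → Plane) → Prop} {f : V → Plane}
    {d : ℝ} (hf : P f) (hd : G.edgeLengths f = {d}) :
    sInf {k : ℕ | ∃ f, P f ∧ (G.edgeLengths f).ncard = k} = 1 := by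
  obtain ⟨u, w, hadj, -⟩ : d ∈ G.edgeLengths f := hd ▸ rfl
  refine le_antisymm (Nat.sInf_le ⟨f, hf, by rw [hd, ncard_singleton]⟩) ?_
  refine Nat.one_le_iff_ne_zero.2 fun h0 => ?_
  have hne : {k : ℕ | ∃ f, P f ∧ (G.edgeLengths f).ncard = k} ≠ ∅ :=
    nonempty_iff_ne_empty.1 ⟨_, f, hf, rfl⟩
  obtain ⟨g, -, hg⟩ := (Nat.sInf_eq_zero.1 h0).resolve_right hne
  exact (ncard_pos (edgeLengths_finite g)).2 ⟨_, u, w, hadj, rfl⟩ |>.ne' hg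

structure IsPasting (G : SimpleGraph V) (A B : Set V) (v : V) : Prop where
  union_eq : A ∪ B = univ
  inter_eq : A ∩ B = {v}
  adj_mem : ∀ u w, G.Adj u w → u ∈ A ∧ w ∈ A ∨ u ∈ B ∧ w ∈ B

namespace IsPasting

variable {A B : Set V} {v : V}

theorem left_mem (hG : G.IsPasting A B v) : v ∈ A := (hG.inter_eq.symm.subset rfl).1

theorem right_mem (hG : G.IsPasting A B v) : v ∈ B := (hG.inter_eq.symm.subset rfl).2

theorem mem_right_of_notMem_left (hG : G.IsPasting A B v) {u : V} (hu : u ∉ A) : u ∈ B :=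
  (hG.union_eq.symm.subset (mem_univ u)).resolve_left hu

theorem mem_left_of_notMem_right (hG : G.IsPasting A B v) {u : V} (hu : u ∉ B) : u ∈ A :=
  (hG.union_eq.symm.subset (mem_univ u)).resolve_right hu

theorem eq_of_mem_of_mem (hG : G.IsPasting A B v) {u : V} (hA : u ∈ A) (hB : u ∈ B) : u = v :=
  hG.inter_eq.subset ⟨hA, hB⟩

theorem exists_extend (hG : G.IsPasting A B v) {X : Type*} (f₁ : A → X) (f₂ : B → X)
    (hv : f₁ ⟨v, hG.left_mem⟩ = f₂ ⟨v, hG.right_mem⟩) :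
    ∃ F : V → X, A.domRestrict F = f₁ ∧ B.domRestrict F = f₂ := by
  classical
  refine ⟨fun u => if hu : u ∈ A then f₁ ⟨u, hu⟩ else f₂ ⟨u, hG.mem_right_of_notMem_left hu⟩,
    funext fun ⟨u, hu⟩ => by simp [hu], funext fun ⟨u, hu⟩ => ?_⟩
  by_cases huA : u ∈ A
  · obtain rfl := hG.eq_of_mem_of_mem huA hu
    simp [huA, hv]
  · simp [huA]

theorem edgeLengths_eq_union (hG : G.IsPasting A B v) (F : V → Plane) :
    G.edgeLengths F =
      (G.induce A).edgeLengths (A.domRestrict F) ∪ (G.induce B).edgeLengths (B.domRestrict F) := by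
  ext d
  constructor
  · rintro ⟨u, w, hadj, rfl⟩
    rcases hG.adj_mem u w hadj with ⟨hu, hw⟩ | ⟨hu, hw⟩
    · exact Or.inl ⟨⟨u, hu⟩, ⟨w, hw⟩, hadj, rfl⟩
    · exact Or.inr ⟨⟨u, hu⟩, ⟨w, hw⟩, hadj, rfl⟩
  · rintro (⟨u, w, hadj, rfl⟩ | ⟨u, w, hadj, rfl⟩) <;> exact ⟨u, w, hadj, rfl⟩

theorem isDegenDrawing (hG : G.IsPasting A B v) {F : V → Plane}
    (h₁ : (G.induce A).IsDegenDrawing (A.domRestrict F))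
    (h₂ : (G.induce B).IsDegenDrawing (B.domRestrict F)) (hBA : AvoidsSegments F (B \ A) A) :
    G.IsDegenDrawing F := by
  have hne : ∀ a ∈ A, ∀ b ∉ A, F b ≠ F a := fun a ha b hb hab =>
    hBA b ⟨hG.mem_right_of_notMem_left hb, hb⟩ a ha a ha (by simp [hab])
  intro u w huw
  by_cases hu : u ∈ A <;> by_cases hw : w ∈ A
  · exact congrArg Subtype.val (h₁ (a₁ := ⟨u, hu⟩) (a₂ := ⟨w, hw⟩) huw)
  · exact absurd huw.symm (hne u hu w hw)
  · exact absurd huw (hne w hw u hu)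
  · exact congrArg Subtype.val (h₂ (a₁ := ⟨u, hG.mem_right_of_notMem_left hu⟩)
      (a₂ := ⟨w, hG.mem_right_of_notMem_left hw⟩) huw)

theorem isDrawing (hG : G.IsPasting A B v) {F : V → Plane}
    (h₁ : (G.induce A).IsDrawing (A.domRestrict F))
    (h₂ : (G.induce B).IsDrawing (B.domRestrict F)) (hBA : AvoidsSegments F (B \ A) A)
    (hAB : AvoidsSegments F (A \ B) B) : G.IsDrawing F := by
  refine ⟨hG.isDegenDrawing h₁.1 h₂.1 hBA, fun u w t hadj => ?_⟩
  rcases hG.adj_mem u w hadj with ⟨hu, hw⟩ | ⟨hu, hw⟩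
  · by_cases ht : t ∈ A
    · exact h₁.2 ⟨u, hu⟩ ⟨w, hw⟩ ⟨t, ht⟩ hadj
    · exact fun h => hBA t ⟨hG.mem_right_of_notMem_left ht, ht⟩ u hu w hw
        (openSegment_subset_segment ℝ _ _ h)
  · by_cases ht : t ∈ B
    · exact h₂.2 ⟨u, hu⟩ ⟨w, hw⟩ ⟨t, ht⟩ hadj
    · exact fun h => hAB t ⟨hG.mem_left_of_notMem_right ht, ht⟩ u hu w hw
        (openSegment_subset_segment ℝ _ _ h)

theorem exists_glued [Finite V] (hG : G.IsPasting A B v) {f₁ : A → Plane} {f₂ : B → Plane}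
    {d₁ d₂ : ℝ} (hf₁ : Injective f₁) (hf₂ : Injective f₂) (hd₁ : (G.induce A).edgeLengths f₁ = {d₁})
    (hd₂ : (G.induce B).edgeLengths f₂ = {d₂}) :
    ∃ F : V → Plane, G.IsDegenDrawing F ∧ G.edgeLengths F = {d₁} ∧
      ((G.induce A).IsDrawing f₁ → (G.induce B).IsDrawing f₂ → G.IsDrawing F) := by
  have hd₂pos := pos_of_edgeLengths_eq_singleton hf₂ hd₂
  have hs : 0 < d₁ / d₂ := div_pos (pos_of_edgeLengths_eq_singleton hf₁ hd₁) hd₂pos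
  set p := f₁ ⟨v, hG.left_mem⟩
  set q := f₂ ⟨v, hG.right_mem⟩
  obtain ⟨c, hc, hQP, hPQ⟩ :=
    exists_spiralSimilarity_avoiding (finite_range f₁) (finite_range f₂) q p hs
  have hσ : Injective (spiralSimilarity c q p) :=
    spiralSimilarity_injective (norm_pos_iff.1 (hc ▸ hs)) q p
  obtain ⟨F, hFA, hFB⟩ :=
    hG.exists_extend f₁ (spiralSimilarity c q p ∘ f₂) (spiralSimilarity_apply_self c q p).symm
  have hF₁ : ∀ a (ha : a ∈ A), F a = f₁ ⟨a, ha⟩ := fun a ha => congrFun hFA ⟨a, ha⟩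
  have hF₂ : ∀ b (hb : b ∈ B), F b = spiralSimilarity c q p (f₂ ⟨b, hb⟩) :=
    fun b hb => congrFun hFB ⟨b, hb⟩
  have hBA : AvoidsSegments F (B \ A) A := by
    rintro b ⟨hb, hbA⟩ a ha a' ha'
    rw [hF₂ b hb, hF₁ a ha, hF₁ a' ha']
    exact hQP _ (mem_range_self _)
      (hf₂.ne (Subtype.coe_ne_coe.1 (ne_of_mem_of_not_mem hG.left_mem hbA).symm))
      _ (mem_range_self _) _ (mem_range_self _)
  have hAB : AvoidsSegments F (A \ B) B := by
    rintro a ⟨ha, haB⟩ b hb b' hb'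
    rw [hF₁ a ha, hF₂ b hb, hF₂ b' hb']
    exact hPQ _ (mem_range_self _)
      (hf₁.ne (Subtype.coe_ne_coe.1 (ne_of_mem_of_not_mem hG.right_mem haB).symm))
      _ (mem_range_self _) _ (mem_range_self _)
  refine ⟨F, hG.isDegenDrawing (hFA ▸ hf₁) (hFB ▸ hσ.comp hf₂) hBA, ?_,
    fun h₁ h₂ => hG.isDrawing (hFA ▸ h₁) (hFB ▸ h₂.comp_affineMap hσ) hBA hAB⟩
  rw [hG.edgeLengths_eq_union, hFA, hFB, edgeLengths_spiralSimilarity_comp, hd₁, hd₂,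
    image_singleton, hc, div_mul_cancel₀ _ hd₂pos.ne', union_self]

theorem ddn_eq_one [Finite V] (hG : G.IsPasting A B v) (h₁ : (G.induce A).ddn = 1)
    (h₂ : (G.induce B).ddn = 1) : G.ddn = 1 := by
  obtain ⟨f₁, d₁, hf₁, hd₁⟩ := exists_edgeLengths_eq_singleton_of_sInf_eq_one h₁
  obtain ⟨f₂, d₂, hf₂, hd₂⟩ := exists_edgeLengths_eq_singleton_of_sInf_eq_one h₂
  obtain ⟨F, hF, hFd, -⟩ := hG.exists_glued hf₁ hf₂ hd₁ hd₂
  exact sInf_ncard_edgeLengths_eq_one hF hFd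

theorem dn_eq_one [Finite V] (hG : G.IsPasting A B v) (h₁ : (G.induce A).dn = 1)
    (h₂ : (G.induce B).dn = 1) : G.dn = 1 := by
  obtain ⟨f₁, d₁, hf₁, hd₁⟩ := exists_edgeLengths_eq_singleton_of_sInf_eq_one h₁
  obtain ⟨f₂, d₂, hf₂, hd₂⟩ := exists_edgeLengths_eq_singleton_of_sInf_eq_one h₂
  obtain ⟨F, -, hFd, hF⟩ := hG.exists_glued hf₁.1 hf₂.1 hd₁ hd₂
  exact sInf_ncard_edgeLengths_eq_one (hF hf₁ hf₂) hFd

end IsPasting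

end SimpleGraph

/-- If `G` is obtained by pasting `G₁` and `G₂` on a vertex `v`
(i.e. `G = G₁ ∪ G₂` where `G₁`, `G₂` are the induced subgraphs of `G` on vertex sets
`A`, `B` with `A ∪ B = V(G)` and `A ∩ B = {v}`), then:
(a) if `ddn G₁ = ddn G₂ = 1` then `ddn G = 1`, and
(b) if `dn G₁ = dn G₂ = 1` then `dn G = 1`. -/
theorem stmt0 {V : Type*} [Fintype V] (G : SimpleGraph V) (A B : Set V) (v : V)
    (hunion : A ∪ B = Set.univ) (hinter : A ∩ B = {v})
    (hsplit : ∀ u w : V, G.Adj u w → (u ∈ A ∧ w ∈ A) ∨ (u ∈ B ∧ w ∈ B)) :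
    ((G.induce A).ddn = 1 → (G.induce B).ddn = 1 → G.ddn = 1) ∧
    ((G.induce A).dn = 1 → (G.induce B).dn = 1 → G.dn = 1) := by
  have hG : G.IsPasting A B v := ⟨hunion, hinter, hsplit⟩
  exact ⟨hG.ddn_eq_one, hG.dn_eq_one⟩
end
end

section
/- Let G1 and G2 be graphs, each isomorphic to a unit-distance graph, and let G be the graph obtained by pasting G1 and G2 on a vertex v, i.e., G = G1 ∪ G2 and V(G1) ∩ V(G2) = {v}. Then G is isomorphic to a unit-distance graph. -/
noncomputable section

/-- `G` is isomorphic to a unit-distance graph: there is an injective map of the vertices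
to the plane such that two vertices are adjacent iff their images are at distance 1. -/
def SimpleGraph.IsUnitDistanceGraph {V : Type*} (G : SimpleGraph V) : Prop :=
  ∃ f : V → Plane, Function.Injective f ∧ ∀ u w : V, G.Adj u w ↔ Dist.dist (f u) (f w) = 1

/-!
Draw both pieces in `ℂ` with the common vertex at the origin and rotate the drawing of the
second piece by a unit complex number `c`. For a vertex `a ≠ v` of the first piece and
`b ≠ v` of the second, the rotations putting `b` at distance `0` or `1` from `a` are the
intersections of the unit circle with a line, so only finitely many `c` are forbidden, and
any other `c` on the (infinite) unit circle gives a unit-distance drawing of the pasted graph.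
-/

open Set Function ComplexConjugate

lemma Set.exists_domRestrict_eq_of_union_eq_univ {α β : Type*} {A B : Set α} (hAB : A ∪ B = univ)
    (f₁ : A → β) (f₂ : B → β) (hf : ∀ x (h₁ : x ∈ A) (h₂ : x ∈ B), f₁ ⟨x, h₁⟩ = f₂ ⟨x, h₂⟩) :
    ∃ g : α → β, A.domRestrict g = f₁ ∧ B.domRestrict g = f₂ := by
  classical
  have hB : ∀ x, x ∉ A → x ∈ B := fun x hx => (hAB ▸ mem_univ x : x ∈ A ∪ B).resolve_left hx
  refine ⟨fun x => if hx : x ∈ A then f₁ ⟨x, hx⟩ else f₂ ⟨x, hB x hx⟩,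
    funext fun x => dif_pos x.2, funext fun ⟨x, hx⟩ => ?_⟩
  by_cases hxA : x ∈ A
  · exact (dif_pos hxA).trans (hf x hxA hx)
  · exact dif_neg hxA

namespace Complex

lemma finite_norm_eq_one_re_mul_eq {z : ℂ} (hz : z ≠ 0) (a : ℝ) :
    {c : ℂ | ‖c‖ = 1 ∧ (c * z).re = a}.Finite := by
  set s := √(‖z‖ ^ 2 - a ^ 2)
  refine ((Set.toFinite {(⟨a, s⟩ : ℂ), ⟨a, -s⟩}).preimage
    (mul_left_injective₀ hz).injOn).subset ?_
  rintro c ⟨hc, hre⟩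
  have him : |(c * z).im| = s := by
    rw [← Real.sqrt_sq_eq_abs, ← sq_norm_sub_sq_re, norm_mul, hc, one_mul, hre]
  rcases (abs_eq (Real.sqrt_nonneg _)).mp him with h | h
  · exact Or.inl (Complex.ext hre h)
  · exact Or.inr (Complex.ext hre h)

lemma finite_norm_eq_one_dist_mul_eq {p q : ℂ} (hp : p ≠ 0) (hq : q ≠ 0) (r : ℝ) :
    {c : ℂ | ‖c‖ = 1 ∧ dist (c * q) p = r}.Finite := by
  refine (finite_norm_eq_one_re_mul_eq (mul_ne_zero hq ((map_ne_zero (starRingEnd ℂ)).mpr hp))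
    ((‖q‖ ^ 2 + ‖p‖ ^ 2 - r ^ 2) / 2)).subset ?_
  rintro c ⟨hc, hdist⟩
  refine ⟨hc, ?_⟩
  have : r ^ 2 = ‖q‖ ^ 2 + ‖p‖ ^ 2 - 2 * (c * (q * conj p)).re := by
    rw [← hdist, dist_eq, Complex.sq_norm, normSq_sub, ← Complex.sq_norm, ← Complex.sq_norm,
      norm_mul, hc, one_mul, mul_assoc]
  linarith

lemma infinite_sphere_zero_one : (Metric.sphere (0 : ℂ) 1).Infinite :=
  (isPreconnected_sphere (by simp [rank_real_complex]) 0 1).infinite_of_nontrivial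
    ⟨1, by simp, -1, by simp, by norm_num⟩

lemma exists_norm_eq_one_forall_dist_mul_notMem {P Q : Set ℂ} (hP : P.Finite) (hQ : Q.Finite)
    {R : Set ℝ} (hR : R.Finite) :
    ∃ c : ℂ, ‖c‖ = 1 ∧ ∀ p ∈ P, ∀ q ∈ Q, p ≠ 0 → q ≠ 0 → dist (c * q) p ∉ R := by
  set bad := ⋃ p ∈ P \ {0}, ⋃ q ∈ Q \ {0}, ⋃ r ∈ R, {c : ℂ | ‖c‖ = 1 ∧ dist (c * q) p = r}
  have hbad : bad.Finite :=
    (hP.sdiff).biUnion fun p hp => (hQ.sdiff).biUnion fun q hq => hR.biUnion fun r _ =>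
      finite_norm_eq_one_dist_mul_eq hp.2 hq.2 r
  obtain ⟨c, hc, hcbad⟩ := (infinite_sphere_zero_one.sdiff hbad).nonempty
  rw [mem_sphere_zero_iff_norm] at hc
  refine ⟨c, hc, fun p hp q hq hp0 hq0 hr => hcbad ?_⟩
  simp only [bad, mem_iUnion]
  exact ⟨p, ⟨hp, hp0⟩, q, ⟨hq, hq0⟩, _, hr, hc, rfl⟩

lemma isometry_mul_left {c : ℂ} (hc : ‖c‖ = 1) : Isometry (c * ·) :=
  Isometry.of_dist_eq fun x y => by rw [dist_eq, dist_eq, ← mul_sub, norm_mul, hc, one_mul]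

end Complex

section UnitDistanceEmbedding

variable {V X Y : Type*} [MetricSpace X] [MetricSpace Y]

-- `Dist.dist` throughout: in the namespace `SimpleGraph`, `dist` is the graph distance.
def SimpleGraph.IsUnitDistanceEmbedding (G : SimpleGraph V) (f : V → X) : Prop :=
  Injective f ∧ ∀ u w : V, G.Adj u w ↔ Dist.dist (f u) (f w) = 1

lemma SimpleGraph.isUnitDistanceGraph_iff {G : SimpleGraph V} :
    G.IsUnitDistanceGraph ↔ ∃ f : V → Plane, G.IsUnitDistanceEmbedding f :=
  Iff.rfl

lemma SimpleGraph.IsUnitDistanceEmbedding.comp_isometry {G : SimpleGraph V} {f : V → X}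
    (hf : G.IsUnitDistanceEmbedding f) {φ : X → Y} (hφ : Isometry φ) :
    G.IsUnitDistanceEmbedding (φ ∘ f) :=
  ⟨hφ.injective.comp hf.1, fun u w => by rw [comp_apply, comp_apply, hφ.dist_eq, hf.2]⟩

lemma SimpleGraph.IsUnitDistanceGraph.exists_complex {G : SimpleGraph V} (h : G.IsUnitDistanceGraph)
    (v : V) : ∃ f : V → ℂ, G.IsUnitDistanceEmbedding f ∧ f v = 0 := by
  obtain ⟨f, hf⟩ := isUnitDistanceGraph_iff.mp h
  let e : ℂ ≃ₗᵢ[ℝ] Plane := Complex.orthonormalBasisOneI.repr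
  exact ⟨_, IsUnitDistanceEmbedding.comp_isometry (f := f) hf
    ((IsometryEquiv.subRight (e.symm (f v))).isometry.comp e.symm.isometry), sub_self _⟩

lemma SimpleGraph.isUnitDistanceEmbedding_of_induce {G : SimpleGraph V} {A B : Set V} {v : V}
    (hunion : A ∪ B = univ) (hinter : A ∩ B = {v})
    (hsplit : ∀ u w : V, G.Adj u w → (u ∈ A ∧ w ∈ A) ∨ (u ∈ B ∧ w ∈ B)) {g : V → X}
    (hA : (G.induce A).IsUnitDistanceEmbedding (A.domRestrict g))
    (hB : (G.induce B).IsUnitDistanceEmbedding (B.domRestrict g))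
    (hcross : ∀ u ∈ A, ∀ w ∈ B, u ≠ v → w ≠ v → g u ≠ g w ∧ Dist.dist (g u) (g w) ≠ 1) :
    G.IsUnitDistanceEmbedding g := by
  have hmem : ∀ u, u ∈ A ∩ B ↔ u = v := fun u => by rw [hinter, mem_singleton_iff]
  have hv : v ∈ A ∩ B := (hmem v).mpr rfl
  let P : V → V → Prop := fun u w => (g u = g w → u = w) ∧ (G.Adj u w ↔ Dist.dist (g u) (g w) = 1)
  have hsymm : ∀ u w, P u w → P w u := fun u w ⟨hinj, hadj⟩ =>
    ⟨fun h => (hinj h.symm).symm, by rw [G.adj_comm, _root_.dist_comm, hadj]⟩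
  have hpiece : ∀ {s : Set V}, (G.induce s).IsUnitDistanceEmbedding (s.domRestrict g) →
      ∀ u ∈ s, ∀ w ∈ s, P u w := fun hs u hu w hw =>
    ⟨fun h => congrArg Subtype.val (@hs.1 ⟨u, hu⟩ ⟨w, hw⟩ h), hs.2 ⟨u, hu⟩ ⟨w, hw⟩⟩
  have hAB : ∀ u ∈ A, ∀ w ∈ B, P u w := by
    intro u hu w hw
    by_cases huv : u = v
    · exact hpiece hB u (huv ▸ hv.2) w hw
    by_cases hwv : w = v
    · exact hpiece hA u hu w (hwv ▸ hv.1)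
    obtain ⟨hne, hdist⟩ := hcross u hu w hw huv hwv
    refine ⟨fun h => absurd h hne, iff_of_false (fun hadj => ?_) hdist⟩
    rcases hsplit u w hadj with ⟨-, hwA⟩ | ⟨huB, -⟩
    · exact hwv ((hmem w).mp ⟨hwA, hw⟩)
    · exact huv ((hmem u).mp ⟨hu, huB⟩)
  have hall : ∀ u w, P u w := by
    intro u w
    have hu : u ∈ A ∪ B := hunion ▸ mem_univ u
    have hw : w ∈ A ∪ B := hunion ▸ mem_univ w
    rcases hu with hu | hu <;> rcases hw with hw | hw
    exacts [hpiece hA u hu w hw, hAB u hu w hw, hsymm _ _ (hAB w hw u hu), hpiece hB u hu w hw]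
  exact ⟨fun u w h => (hall u w).1 h, fun u w => (hall u w).2⟩

end UnitDistanceEmbedding

/-- If `G` is obtained by pasting `G₁` and `G₂` on a vertex `v`
(i.e. `G = G₁ ∪ G₂` where `G₁`, `G₂` are the induced subgraphs of `G` on vertex sets
`A`, `B` with `A ∪ B = V(G)` and `A ∩ B = {v}`), and both `G₁` and `G₂` are isomorphic to
unit-distance graphs, then `G` is isomorphic to a unit-distance graph. -/
theorem stmt1 {V : Type*} [Fintype V] (G : SimpleGraph V) (A B : Set V) (v : V)
    (hunion : A ∪ B = Set.univ) (hinter : A ∩ B = {v})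
    (hsplit : ∀ u w : V, G.Adj u w → (u ∈ A ∧ w ∈ A) ∨ (u ∈ B ∧ w ∈ B))
    (h1 : (G.induce A).IsUnitDistanceGraph) (h2 : (G.induce B).IsUnitDistanceGraph) :
    G.IsUnitDistanceGraph := by
  have hv : v ∈ A ∩ B := hinter ▸ rfl
  obtain ⟨f₁, hf₁, hf₁v⟩ := h1.exists_complex ⟨v, hv.1⟩
  obtain ⟨f₂, hf₂, hf₂v⟩ := h2.exists_complex ⟨v, hv.2⟩
  obtain ⟨c, hc, hc_avoid⟩ := Complex.exists_norm_eq_one_forall_dist_mul_notMem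
    (finite_range f₁) (finite_range f₂) (toFinite {0, 1})
  obtain ⟨g, hgA, hgB⟩ := exists_domRestrict_eq_of_union_eq_univ hunion f₁ ((c * ·) ∘ f₂)
    fun u hu₁ hu₂ => by
      obtain rfl : u = v := (Set.ext_iff.mp hinter u).mp ⟨hu₁, hu₂⟩
      simp [hf₁v, hf₂v]
  have hcross : ∀ u ∈ A, ∀ w ∈ B, u ≠ v → w ≠ v → g u ≠ g w ∧ dist (g u) (g w) ≠ 1 := by
    intro u hu w hw huv hwv
    have hu0 : f₁ ⟨u, hu⟩ ≠ 0 := hf₁v ▸ hf₁.1.ne (by simpa using huv)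
    have hw0 : f₂ ⟨w, hw⟩ ≠ 0 := hf₂v ▸ hf₂.1.ne (by simpa using hwv)
    have hgu : g u = f₁ ⟨u, hu⟩ := congrFun hgA ⟨u, hu⟩
    have hgw : g w = c * f₂ ⟨w, hw⟩ := congrFun hgB ⟨w, hw⟩
    rw [hgu, hgw]
    simpa [dist_eq_zero, eq_comm, dist_comm, not_or] using
      hc_avoid _ (mem_range_self _) _ (mem_range_self _) hu0 hw0
  have hg := SimpleGraph.isUnitDistanceEmbedding_of_induce hunion hinter hsplit (hgA ▸ hf₁)
    (hgB ▸ hf₂.comp_isometry (Complex.isometry_mul_left hc)) hcross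
  exact SimpleGraph.isUnitDistanceGraph_iff.mpr
    ⟨_, hg.comp_isometry Complex.orthonormalBasisOneI.repr.isometry⟩
end
end

section
/- Every 2-connected graph with at least 3 vertices that has no K4⁻-minor is a cycle, where K4⁻ is the graph obtained from the complete graph K4 by deleting one edge. -/
noncomputable section

/-- `K₄⁻`: the complete graph on 4 vertices with one edge deleted. -/
def K4minus : SimpleGraph (Fin 4) := (SimpleGraph.completeGraph (Fin 4)).deleteEdges {s(0, 1)}

/-- `H` is a minor of `G`: `H` can be obtained from a subgraph of `G` by contracting edges.
Equivalently, there are nonempty, pairwise disjoint, connected branch sets in `G`, one for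
each vertex of `H`, with an edge of `G` between the branch sets of adjacent vertices of `H`. -/
def SimpleGraph.HasMinor {V W : Type*} (G : SimpleGraph V) (H : SimpleGraph W) : Prop :=
  ∃ B : W → Set V,
    (∀ w, (B w).Nonempty) ∧
    (∀ w, (G.induce (B w)).Connected) ∧
    (Pairwise fun w₁ w₂ => Disjoint (B w₁) (B w₂)) ∧
    (∀ w₁ w₂ : W, H.Adj w₁ w₂ → ∃ a ∈ B w₁, ∃ b ∈ B w₂, G.Adj a b)

/-- `G` is 2-connected: connected, at least 3 vertices, and still connected after
deleting any single vertex. -/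
def SimpleGraph.IsTwoConnected {V : Type*} [Fintype V] (G : SimpleGraph V) : Prop :=
  G.Connected ∧ 3 ≤ Fintype.card V ∧ ∀ v : V, (G.induce ({v}ᶜ : Set V)).Connected

/-!
In a 2-connected graph every vertex `v` has two neighbours: one since `G` is connected and
another since `G - a` is connected for a neighbour `a`. If `v` had three neighbours `a, b, c`,
then in the connected graph `G - v` a path from `a` to `b` together with a path from `c` to it
form a subdivided claw; its legs yield connected sets `X – Z – Y`, each containing a neighbour
of `v`, and with `{v}` these are the branch sets of a `K₄⁻`-minor, as `K₄⁻` is a vertex joined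
to a path on three vertices. Hence `G` is connected and 2-regular, and then a cycle of `G`,
viewed as a copy of `cycleGraph n`, is closed under adjacency and so is all of `G`.
-/

lemma K4minus_adj {i j : Fin 4} : K4minus.Adj i j ↔ i ≠ j ∧ s(i, j) ≠ s(0, 1) := by
  simp [K4minus]

namespace SimpleGraph

variable {V W : Type*}

lemma connected_induce_image_val {G : SimpleGraph V} {U : Set V} {S : Set U}
    (h : ((G.induce U).induce S).Connected) : (G.induce (Subtype.val '' S)).Connected :=
  h.map (induceHom (Embedding.induce U).toHom (Set.mapsTo_image _ _))
    (by rintro ⟨_, x, hx, rfl⟩; exact ⟨⟨x, hx⟩, rfl⟩)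

namespace Walk

variable {H : SimpleGraph W} {u v w x : W}

lemma IsPath.mem_support_tail_iff {p : H.Walk u v} (hp : p.IsPath) (hnil : ¬p.Nil) :
    x ∈ p.tail.support ↔ x ∈ p.support ∧ x ≠ u := by
  have hnd := hp.support_nodup
  rw [← cons_support_tail hnil, List.nodup_cons] at hnd
  rw [← cons_support_tail hnil, List.mem_cons]
  grind

lemma IsPath.eq_of_mem_support_takeUntil_of_mem_support_dropUntil [DecidableEq W]
    {p : H.Walk u v} (hp : p.IsPath) (hw : w ∈ p.support) (hx₁ : x ∈ (p.takeUntil w hw).support)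
    (hx₂ : x ∈ (p.dropUntil w hw).support) : x = w := by
  have hnd := hp.support_nodup
  rw [← p.take_spec hw, support_append, List.nodup_append] at hnd
  rw [← cons_tail_support, List.mem_cons] at hx₂
  exact hx₂.resolve_right fun h => hnd.2.2 x hx₁ x h rfl

end Walk

/-- Branch sets of a minor `left – center – right` (a path on three vertices) of `H`, each of
which meets `T`. -/
structure RootedP3Model (H : SimpleGraph W) (T : Set W) where
  left : Set W
  center : Set W
  right : Set W
  connected_left : (H.induce left).Connected
  connected_center : (H.induce center).Connected
  connected_right : (H.induce right).Connected
  disjoint_left_center : Disjoint left center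
  disjoint_left_right : Disjoint left right
  disjoint_center_right : Disjoint center right
  adj_left : ∃ x ∈ center, ∃ y ∈ left, H.Adj x y
  adj_right : ∃ x ∈ center, ∃ y ∈ right, H.Adj x y
  meets_left : (left ∩ T).Nonempty
  meets_center : (center ∩ T).Nonempty
  meets_right : (right ∩ T).Nonempty

namespace RootedP3Model

variable {H : SimpleGraph W} {T : Set W}

def ofLegs {m a b c : W} (ha : a ∈ T) (hb : b ∈ T) (hc : c ∈ T)
    {p : H.Walk m a} {q : H.Walk m b} (r : H.Walk m c) (hp : p.IsPath) (hq : q.IsPath)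
    (hpn : ¬p.Nil) (hqn : ¬q.Nil) (hpq : ∀ x ∈ p.support, x ∈ q.support → x = m)
    (hpr : ∀ x ∈ p.support, x ∈ r.support → x = m)
    (hqr : ∀ x ∈ q.support, x ∈ r.support → x = m) : H.RootedP3Model T where
  left := {x | x ∈ p.tail.support}
  center := {x | x ∈ r.support}
  right := {x | x ∈ q.tail.support}
  connected_left := p.tail.connected_induce_support
  connected_center := r.connected_induce_support
  connected_right := q.tail.connected_induce_support
  disjoint_left_center := Set.disjoint_left.2 fun x hx hx' =>
    have hx := (hp.mem_support_tail_iff hpn).1 hx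
    hx.2 (hpr x hx.1 hx')
  disjoint_left_right := Set.disjoint_left.2 fun x hx hx' =>
    have hx := (hp.mem_support_tail_iff hpn).1 hx
    hx.2 (hpq x hx.1 ((hq.mem_support_tail_iff hqn).1 hx').1)
  disjoint_center_right := Set.disjoint_left.2 fun x hx hx' =>
    have hx' := (hq.mem_support_tail_iff hqn).1 hx'
    hx'.2 (hqr x hx'.1 hx)
  adj_left := ⟨m, r.start_mem_support, p.snd, p.tail.start_mem_support, p.adj_snd hpn⟩
  adj_right := ⟨m, r.start_mem_support, q.snd, q.tail.start_mem_support, q.adj_snd hqn⟩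
  meets_left := ⟨a, p.tail.end_mem_support, ha⟩
  meets_center := ⟨c, r.end_mem_support, hc⟩
  meets_right := ⟨b, q.tail.end_mem_support, hb⟩

end RootedP3Model

theorem Connected.nonempty_rootedP3Model {H : SimpleGraph W} (hH : H.Connected) {T : Set W}
    {a b c : W} (ha : a ∈ T) (hb : b ∈ T) (hc : c ∈ T) (hab : a ≠ b) (hac : a ≠ c)
    (hbc : b ≠ c) : Nonempty (H.RootedP3Model T) := by
  classical
  obtain ⟨P, hP⟩ := hH.exists_isPath a b
  obtain ⟨R, hR⟩ := hH.exists_isPath c a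
  -- `m` is the first vertex of `R` on `P`; the legs run from `m` to `a`, `b` and `c`.
  obtain ⟨m, hmP, hmR, hfirst⟩ :=
    R.exists_mem_support_forall_mem_support_imp_eq P.support.toFinset ⟨a, by simp⟩
  rw [List.mem_toFinset] at hmP
  have hp : (P.takeUntil m hmP).reverse.IsPath := (hP.takeUntil hmP).reverse
  have hq : (P.dropUntil m hmP).IsPath := hP.dropUntil hmP
  have hr : (R.takeUntil m hmR).reverse.IsPath := (hR.takeUntil hmR).reverse
  have hpq : ∀ x ∈ (P.takeUntil m hmP).reverse.support, x ∈ (P.dropUntil m hmP).support →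
      x = m := fun x h₁ h₂ =>
    hP.eq_of_mem_support_takeUntil_of_mem_support_dropUntil hmP (by simpa using h₁) h₂
  have hpr : ∀ x ∈ (P.takeUntil m hmP).reverse.support, x ∈ (R.takeUntil m hmR).reverse.support →
      x = m := fun x h₁ h₂ =>
    hfirst x (by simpa using P.support_takeUntil_subset_support hmP (by simpa using h₁))
      (by simpa using h₂)
  have hqr : ∀ x ∈ (P.dropUntil m hmP).support, x ∈ (R.takeUntil m hmR).reverse.support →
      x = m := fun x h₁ h₂ =>
    hfirst x (by simpa using P.support_dropUntil_subset_support hmP h₁) (by simpa using h₂)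
  by_cases hma : m = a
  · subst hma
    exact ⟨.ofLegs hb hc ha _ hq hr (Walk.not_nil_of_ne hab) (Walk.not_nil_of_ne hac) hqr
      (fun x h₁ h₂ => hpq x h₂ h₁) (fun x h₁ h₂ => hpr x h₂ h₁)⟩
  by_cases hmb : m = b
  · subst hmb
    exact ⟨.ofLegs ha hc hb _ hp hr (Walk.not_nil_of_ne hma) (Walk.not_nil_of_ne hbc) hpr hpq
      (fun x h₁ h₂ => hqr x h₂ h₁)⟩
  exact ⟨.ofLegs ha hb hc _ hp hq (Walk.not_nil_of_ne hma) (Walk.not_nil_of_ne hmb) hpq hpr hqr⟩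

theorem hasMinor_K4minus_of_rootedP3Model {G : SimpleGraph V} {v : V}
    (M : (G.induce {v}ᶜ).RootedP3Model {x | G.Adj v x}) : G.HasMinor K4minus := by
  have hvS : ∀ S : Set ↥({v}ᶜ : Set V), Disjoint {v} (Subtype.val '' S) := fun S =>
    Set.disjoint_singleton_left.2 fun ⟨x, _, hx⟩ => x.2 hx
  have hST : ∀ {S S' : Set ↥({v}ᶜ : Set V)}, Disjoint S S' →
      Disjoint (Subtype.val '' S) (Subtype.val '' S') :=
    (Set.disjoint_image_of_injective Subtype.val_injective ·)
  obtain ⟨xl, hxl, hvl⟩ := M.meets_left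
  obtain ⟨xc, hxc, hvc⟩ := M.meets_center
  obtain ⟨xr, hxr, hvr⟩ := M.meets_right
  obtain ⟨cl, hcl, l, hl, hadjl⟩ := M.adj_left
  obtain ⟨cr, hcr, r, hr, hadjr⟩ := M.adj_right
  -- `K4minus` is `v` (vertex `2`) joined to the path `0 – 3 – 1`.
  refine ⟨![Subtype.val '' M.left, Subtype.val '' M.right, {v}, Subtype.val '' M.center],
    fun w => ?_, fun w => ?_, fun i j hij => ?_, fun i j hij => ?_⟩
  · fin_cases w
    exacts [⟨_, Set.mem_image_of_mem _ hxl⟩, ⟨_, Set.mem_image_of_mem _ hxr⟩, ⟨v, rfl⟩,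
      ⟨_, Set.mem_image_of_mem _ hxc⟩]
  · fin_cases w
    exacts [connected_induce_image_val M.connected_left,
      connected_induce_image_val M.connected_right, by simp [connected_top],
      connected_induce_image_val M.connected_center]
  · fin_cases i <;> fin_cases j <;> first
      | exact absurd rfl hij
      | exact hST M.disjoint_left_right | exact (hST M.disjoint_left_right).symm
      | exact hST M.disjoint_left_center | exact (hST M.disjoint_left_center).symm
      | exact (hST M.disjoint_center_right).symm | exact hST M.disjoint_center_right
      | exact (hvS _).symm | exact hvS _
  · rw [K4minus_adj] at hij
    fin_cases i <;> fin_cases j <;> first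
      | exact ⟨_, ⟨_, hxl, rfl⟩, v, rfl, hvl.symm⟩
      | exact ⟨v, rfl, _, ⟨_, hxl, rfl⟩, hvl⟩
      | exact ⟨_, ⟨_, hxr, rfl⟩, v, rfl, hvr.symm⟩
      | exact ⟨v, rfl, _, ⟨_, hxr, rfl⟩, hvr⟩
      | exact ⟨_, ⟨_, hxc, rfl⟩, v, rfl, hvc.symm⟩
      | exact ⟨v, rfl, _, ⟨_, hxc, rfl⟩, hvc⟩
      | exact ⟨_, ⟨_, hl, rfl⟩, _, ⟨_, hcl, rfl⟩, hadjl.symm⟩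
      | exact ⟨_, ⟨_, hcl, rfl⟩, _, ⟨_, hl, rfl⟩, hadjl⟩
      | exact ⟨_, ⟨_, hr, rfl⟩, _, ⟨_, hcr, rfl⟩, hadjr.symm⟩
      | exact ⟨_, ⟨_, hcr, rfl⟩, _, ⟨_, hr, rfl⟩, hadjr⟩
      | simp at hij

theorem hasMinor_K4minus_of_three_adj {G : SimpleGraph V} {v a b c : V}
    (hv : (G.induce {v}ᶜ).Connected) (ha : G.Adj v a) (hb : G.Adj v b) (hc : G.Adj v c)
    (hab : a ≠ b) (hac : a ≠ c) (hbc : b ≠ c) : G.HasMinor K4minus :=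
  have ⟨M⟩ := hv.nonempty_rootedP3Model (a := ⟨a, ha.ne'⟩) (b := ⟨b, hb.ne'⟩)
    (c := ⟨c, hc.ne'⟩) ha hb hc (Subtype.coe_ne_coe.1 hab) (Subtype.coe_ne_coe.1 hac)
    (Subtype.coe_ne_coe.1 hbc)
  hasMinor_K4minus_of_rootedP3Model M

theorem IsTwoConnected.nontrivial [Fintype V] {G : SimpleGraph V} (h : G.IsTwoConnected) :
    Nontrivial V :=
  Fintype.one_lt_card_iff_nontrivial.1 (by have := h.2.1; omega)

theorem IsTwoConnected.two_le_ncard_neighborSet [Fintype V] {G : SimpleGraph V}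
    (h : G.IsTwoConnected) (v : V) : 2 ≤ (G.neighborSet v).ncard := by
  classical
  have := h.nontrivial
  obtain ⟨hconn, hcard, hdel⟩ := h
  obtain ⟨a, ha⟩ := hconn.preconnected.exists_adj_of_nontrivial v
  have : Nontrivial ↥({a}ᶜ : Set V) := Fintype.one_lt_card_iff_nontrivial.1 (by
    rw [Fintype.card_compl_set, Set.card_singleton]; omega)
  obtain ⟨b, hb⟩ := (hdel a).preconnected.exists_adj_of_nontrivial ⟨v, ha.ne⟩
  calc 2 = ({a, b.1} : Set V).ncard := (Set.ncard_pair fun h => b.2 h.symm).symm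
    _ ≤ (G.neighborSet v).ncard := Set.ncard_le_ncard (by rintro x (rfl | rfl); exacts [ha, hb])

theorem IsTwoConnected.isCycles [Fintype V] {G : SimpleGraph V} (h : G.IsTwoConnected)
    (hK : ¬G.HasMinor K4minus) : G.IsCycles := by
  intro v _
  refine le_antisymm ?_ (h.two_le_ncard_neighborSet v)
  by_contra! h3
  obtain ⟨a, b, c, ha, hb, hc, hab, hac, hbc⟩ := (Set.two_lt_ncard_iff).1 h3
  exact hK (hasMinor_K4minus_of_three_adj (h.2.2 v) ha hb hc hab hac hbc)

lemma Preconnected.eq_univ_of_adj_mem {G : SimpleGraph V} (hG : G.Preconnected) {S : Set V}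
    (hne : S.Nonempty) (hS : ∀ ⦃x y⦄, G.Adj x y → x ∈ S → y ∈ S) : S = Set.univ := by
  obtain ⟨x, hx⟩ := hne
  refine Set.eq_univ_of_forall fun y => ?_
  obtain ⟨q⟩ := hG x y
  induction q with
  | nil => exact hx
  | cons h _ ih => exact ih (hS h hx)

lemma Hom.image_neighborSet_eq_of_ncard_le {A : SimpleGraph V} {B : SimpleGraph W} (f : A →g B)
    (hf : Function.Injective f) {x : V} (hfin : (B.neighborSet (f x)).Finite)
    (hle : (B.neighborSet (f x)).ncard ≤ (A.neighborSet x).ncard) :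
    f '' A.neighborSet x = B.neighborSet (f x) :=
  Set.eq_of_subset_of_ncard_le (Set.image_subset_iff.2 fun _ => f.map_adj)
    (by rwa [Set.ncard_image_of_injective _ hf]) hfin

lemma ncard_neighborSet_cycleGraph (n : ℕ) (i : Fin (n + 3)) :
    ((cycleGraph (n + 3)).neighborSet i).ncard = 2 := by
  rw [← coe_neighborFinset, Set.ncard_coe_finset, card_neighborFinset_eq_degree,
    cycleGraph_degree_three_le]

theorem Connected.exists_iso_cycleGraph_of_isCycles [Finite V] [Nontrivial V]
    {G : SimpleGraph V} (hG : G.Connected) (hcyc : G.IsCycles) :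
    ∃ n, 3 ≤ n ∧ Nonempty (G ≃g cycleGraph n) := by
  obtain ⟨v⟩ := ‹Nontrivial V›.to_nonempty
  obtain ⟨w, hvw⟩ := hG.preconnected.exists_adj_of_nontrivial v
  obtain ⟨p, hp, -⟩ := hcyc.exists_cycle_toSubgraph_verts_eq_connectedComponentSupp
    (c := G.connectedComponentMk v) rfl ⟨w, hvw⟩
  obtain ⟨n, hn⟩ := Nat.exists_eq_add_of_le' hp.three_le_length
  obtain ⟨f⟩ := (cycleGraph_isContained_iff (by omega : 2 < n + 3)).2 ⟨v, p, hp, hn⟩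
  have hnbr (i : Fin (n + 3)) : f '' (cycleGraph (n + 3)).neighborSet i = G.neighborSet (f i) := by
    have hi : (cycleGraph (n + 3)).Adj i (i + 1) := by simp [cycleGraph_adj]
    refine f.toHom.image_neighborSet_eq_of_ncard_le f.injective (Set.toFinite _) ?_
    rw [ncard_neighborSet_cycleGraph, hcyc ⟨_, f.toHom.map_adj hi⟩]
  have hsurj : Function.Surjective f := by
    refine Set.range_eq_univ.1 (hG.preconnected.eq_univ_of_adj_mem ⟨f 0, 0, rfl⟩ ?_)
    rintro _ y hy ⟨i, rfl⟩
    obtain ⟨j, -, rfl⟩ := (hnbr i).ge hy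
    exact ⟨j, rfl⟩
  refine ⟨n + 3, by omega, ⟨Iso.symm
    { Equiv.ofBijective f ⟨f.injective, hsurj⟩ with map_rel_iff' := fun {i j} => ?_ }⟩⟩
  refine ⟨fun h => ?_, f.toHom.map_adj⟩
  obtain ⟨k, hk, hkj⟩ := (hnbr i).ge h
  exact f.injective hkj ▸ hk

end SimpleGraph

/-- Every 2-connected graph with at least 3 vertices and no `K₄⁻`-minor
is a cycle. -/
theorem stmt3 {V : Type*} [Fintype V] (G : SimpleGraph V)
    (h2 : G.IsTwoConnected) (hK : ¬ G.HasMinor K4minus) :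
    ∃ n : ℕ, 3 ≤ n ∧ Nonempty (G ≃g SimpleGraph.cycleGraph n) :=
  have := h2.nontrivial
  h2.1.exists_iso_cycleGraph_of_isCycles (h2.isCycles hK)
end
end

section
/- For all integers n ≥ m ≥ 1, the distance-number of the complete bipartite graph K_{m,n} satisfies dn(K_{m,n}) ≤ ⌈n/2⌉. In particular, dn(K_{n,n}) ≤ ⌈n/2⌉. -/
noncomputable section

/-! Place the vertices on a regular `2n`-gon inscribed in the unit circle, the first colour class
on the corners `0, 2, …, 2m - 2` and the second on the odd-indexed ones. Points of a
circle are in strictly convex position, so this is a drawing. An edge joins two corners an odd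
number `t` of steps apart, and its length `2|sin (tπ/2n)|` only depends on `min t (2n - t)`, an
odd number at most `n`; there are `⌈n/2⌉` of those. -/

open Real

namespace SimpleGraph

variable {V : Type*} (G : SimpleGraph V)

theorem dn_le_card_of_edgeLengths_subset {f : V → Plane} (hf : G.IsDrawing f) {s : Finset ℝ}
    (hs : G.edgeLengths f ⊆ s) : G.dn ≤ s.card :=
  calc G.dn ≤ (G.edgeLengths f).ncard := Nat.sInf_le ⟨f, hf, rfl⟩
    _ ≤ (s : Set ℝ).ncard := Set.ncard_le_ncard hs s.finite_toSet
    _ = s.card := Set.ncard_coe_finset s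

theorem isDrawing_of_injective_of_mem_sphere {f : V → Plane} (hf : Function.Injective f)
    {c : Plane} {r : ℝ} (hs : ∀ v, f v ∈ Metric.sphere c r) : G.IsDrawing f := by
  refine ⟨hf, fun u v w huv hw => ?_⟩
  have hne : f u ≠ f v := fun h => G.loopless.irrefl _ (hf h ▸ huv)
  have := openSegment_subset_ball_of_ne (Metric.sphere_subset_closedBall (hs u))
    (Metric.sphere_subset_closedBall (hs v)) hne hw
  exact (Metric.mem_sphere.mp (hs w)).not_lt this

end SimpleGraph

theorem Complex.dist_exp_ofReal_mul_I (x y : ℝ) :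
    dist (exp (x * I)) (exp (y * I)) = 2 * |Real.sin ((x - y) / 2)| := by
  have h : exp (x * I) - exp (y * I) = exp (y * I) * (exp (I * ↑(x - y)) - 1) := by
    rw [mul_sub, ← Complex.exp_add, mul_one]
    push_cast
    ring_nf
  rw [dist_eq_norm, h, norm_mul, norm_exp_ofReal_mul_I, one_mul,
    norm_exp_I_mul_ofReal_sub_one, Real.norm_eq_abs, abs_mul, abs_two]

def polygonVertex (N k : ℕ) : Plane :=
  Complex.orthonormalBasisOneI.repr (Complex.exp (↑(2 * π * k / N) * Complex.I))

theorem polygonVertex_mem_sphere (N k : ℕ) : polygonVertex N k ∈ Metric.sphere 0 1 := by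
  rw [mem_sphere_zero_iff_norm, polygonVertex, LinearIsometryEquiv.norm_map,
    Complex.norm_exp_ofReal_mul_I]

theorem dist_polygonVertex (N k l : ℕ) :
    dist (polygonVertex N k) (polygonVertex N l) = 2 * |sin (π * (k - l) / N)| := by
  rw [polygonVertex, polygonVertex, LinearIsometryEquiv.dist_map, Complex.dist_exp_ofReal_mul_I]
  ring_nf

theorem polygonVertex_injOn (N : ℕ) : Set.InjOn (polygonVertex N) (Set.Iio N) := by
  intro k hk l hl h
  have hN : (0 : ℝ) < N := Nat.cast_pos.mpr (Nat.zero_lt_of_lt hk)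
  have hk' : (k : ℝ) < N := by exact_mod_cast hk
  have hl' : (l : ℝ) < N := by exact_mod_cast hl
  have hsin : sin (π * (k - l) / N) = 0 := by
    have := dist_polygonVertex N k l
    rw [h, dist_self] at this
    simpa using this.symm
  have hlt : -π < π * (k - l) / N ∧ π * (k - l) / N < π := by
    rw [lt_div_iff₀ hN, div_lt_iff₀ hN]
    constructor <;> nlinarith [pi_pos]
  have := (sin_eq_zero_iff_of_lt_of_lt hlt.1 hlt.2).mp hsin
  simp only [div_eq_zero_iff, mul_eq_zero, pi_ne_zero, hN.ne', sub_eq_zero, false_or, or_false]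
    at this
  exact_mod_cast this

/-- Chords of the regular `2n`-gon spanning `2k + 1` sides; `k < ⌈n/2⌉` means `2k + 1 ≤ n`. -/
def oddChordLengths (n : ℕ) : Finset ℝ :=
  (Finset.range ⌈(n : ℝ) / 2⌉₊).image fun k : ℕ => 2 * |sin (π * (2 * k + 1) / (2 * n))|

theorem dist_polygonVertex_mem_oddChordLengths {n a b : ℕ} (ha : a < 2 * n) (hb : b < 2 * n)
    (hab : Odd (a + b)) :
    dist (polygonVertex (2 * n) a) (polygonVertex (2 * n) b) ∈ oddChordLengths n := by
  wlog hba : b ≤ a generalizing a b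
  · rw [dist_comm]
    exact this hb ha (by rwa [add_comm]) (by omega)
  have hn : (n : ℝ) ≠ 0 := Nat.cast_ne_zero.mpr (by omega)
  obtain ⟨k, hkn, hk⟩ : ∃ k, 2 * k + 1 ≤ n ∧ (a - b = 2 * k + 1 ∨ a - b = 2 * n - (2 * k + 1)) := by
    obtain ⟨c, hc⟩ := hab
    rcases le_or_gt (a - b) n with h | h
    · exact ⟨(a - b) / 2, by omega, Or.inl (by omega)⟩
    · exact ⟨(2 * n - (a - b)) / 2, by omega, Or.inr (by omega)⟩
  refine Finset.mem_image.mpr ⟨k, ?_, ?_⟩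
  · rw [Finset.mem_range, Nat.lt_ceil, lt_div_iff₀ two_pos]
    exact_mod_cast (by omega : k * 2 < n)
  rw [dist_polygonVertex, ← Nat.cast_sub hba]
  rcases hk with hk | hk
  · rw [hk]
    push_cast
    rfl
  · rw [hk, Nat.cast_sub (by omega)]
    push_cast
    rw [show π * (2 * n - (2 * k + 1)) / (2 * n) = π - π * (2 * k + 1) / (2 * n) by
      field_simp, sin_pi_sub]

def bipartitePosition {m n : ℕ} : Fin m ⊕ Fin n → ℕ :=
  Sum.elim (fun i => 2 * i) (fun j => 2 * j + 1)

theorem bipartitePosition_injective {m n : ℕ} :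
    Function.Injective (bipartitePosition (m := m) (n := n)) := by
  rintro (i | j) (i' | j') h <;> simp only [bipartitePosition, Sum.elim_inl, Sum.elim_inr] at h
  · exact congrArg Sum.inl (Fin.ext (by omega))
  · omega
  · omega
  · exact congrArg Sum.inr (Fin.ext (by omega))

theorem bipartitePosition_lt {m n : ℕ} (hmn : m ≤ n) (v : Fin m ⊕ Fin n) :
    bipartitePosition v < 2 * n := by
  rcases v with i | j <;> simp only [bipartitePosition, Sum.elim_inl, Sum.elim_inr] <;> omega

theorem odd_bipartitePosition_add {m n : ℕ} {u v : Fin m ⊕ Fin n}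
    (h : (completeBipartiteGraph (Fin m) (Fin n)).Adj u v) :
    Odd (bipartitePosition u + bipartitePosition v) := by
  rcases u with i | j <;> rcases v with i' | j' <;> simp [bipartitePosition, Nat.odd_add] at h ⊢

theorem dn_completeBipartiteGraph_le {m n : ℕ} (hmn : m ≤ n) :
    (completeBipartiteGraph (Fin m) (Fin n)).dn ≤ ⌈(n : ℝ) / 2⌉₊ := by
  set f := fun v => polygonVertex (2 * n) (bipartitePosition v)
  have hf : (completeBipartiteGraph (Fin m) (Fin n)).IsDrawing f :=
    SimpleGraph.isDrawing_of_injective_of_mem_sphere _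
      (fun u v h => bipartitePosition_injective <|
        polygonVertex_injOn _ (bipartitePosition_lt hmn u) (bipartitePosition_lt hmn v) h)
      (fun v => polygonVertex_mem_sphere _ _)
  refine (SimpleGraph.dn_le_card_of_edgeLengths_subset _ hf (s := oddChordLengths n) ?_).trans
    (Finset.card_image_le.trans (Finset.card_range _).le)
  rintro _ ⟨u, v, huv, rfl⟩
  exact dist_polygonVertex_mem_oddChordLengths (bipartitePosition_lt hmn u)
    (bipartitePosition_lt hmn v) (odd_bipartitePosition_add huv)

theorem stmt7_general (m n : ℕ) (hmn : m ≤ n) :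
    (completeBipartiteGraph (Fin m) (Fin n)).dn ≤ ⌈(n : ℝ) / 2⌉₊ ∧
    (completeBipartiteGraph (Fin n) (Fin n)).dn ≤ ⌈(n : ℝ) / 2⌉₊ :=
  ⟨dn_completeBipartiteGraph_le hmn, dn_completeBipartiteGraph_le le_rfl⟩

/-- For `n ≥ m ≥ 1`, `dn (K_{m,n}) ≤ ⌈n/2⌉`; in particular
`dn (K_{n,n}) ≤ ⌈n/2⌉`. -/
theorem stmt7 (m n : ℕ) (hm : 1 ≤ m) (hmn : m ≤ n) :
    (completeBipartiteGraph (Fin m) (Fin n)).dn ≤ ⌈(n : ℝ) / 2⌉₊ ∧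
    (completeBipartiteGraph (Fin n) (Fin n)).dn ≤ ⌈(n : ℝ) / 2⌉₊ :=
  stmt7_general m n hmn
end
end

section
/- Let H be a graph admitting a drawing D with at most s distinct edge-slopes and at most ℓ distinct edge-lengths, where s, ℓ ≥ 1. Let G be a graph admitting an H-partition of width w ≥ 1. Then the distance-number of G satisfies dn(G) ≤ s·ℓ·w·(w−1) + ⌊w/2⌋ + ℓ. -/
noncomputable section

/-- The set of edge-slopes of a drawing `f` of `G`: the directions (lines through the
origin) spanned by the difference vectors of adjacent vertices. -/
def SimpleGraph.edgeSlopes {V : Type*} (G : SimpleGraph V) (f : V → Plane) :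
    Set (Submodule ℝ Plane) :=
  {L | ∃ u v : V, G.Adj u v ∧ L = Submodule.span ℝ {f v - f u}}

/-!
Blow up each vertex `i` of the drawing of `H` into a regular `w`-gon scaled by a small `ε` and
centred at `g i`, and put the vertices of the part `P ⁻¹' {i}` on distinct corners. An edge inside
a part is a chord of the `w`-gon, so it has one of `⌊w/2⌋` lengths; an edge between parts whose
ends sit on corners of equal index is a translate of an edge of `H`; any other edge is
`t + ε • (ζ_b - ζ_a)` for an edge vector `t` of `H`, and `t` is determined up to sign by its slope
and its length, which leaves `s ℓ w (w - 1)` lengths.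

For small `ε` this is a drawing: a vertex that is off the segment of an edge at `ε = 0` stays off
it by continuity, three corners of one polygon are never collinear, and a vertex in the part of an
endpoint of an edge between parts is handled by rotating the polygon so that none of its chords
is parallel to an edge of `H`.
-/

open Filter Topology Set Function Complex

theorem exists_index_injOn_fibers {V W : Type*} [Finite V] (P : V → W) {n : ℕ}
    (h : ∀ i, (P ⁻¹' {i}).ncard ≤ n) :
    ∃ idx : V → Fin n, ∀ u v, P u = P v → idx u = idx v → u = v := by
  have hemb (i : W) : Nonempty (P ⁻¹' {i} ↪ Fin n) := by
    have := Fintype.ofFinite (P ⁻¹' {i})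
    refine Function.Embedding.nonempty_of_card_le ?_
    rw [Fintype.card_fin, ← Nat.card_eq_fintype_card, Nat.card_coe_set_eq]
    exact h i
  let emb i := (hemb i).some
  set idx : V → Fin n := fun u => emb (P u) ⟨u, rfl⟩
  have hidx (u : V) (i : W) (hu : P u = i) : idx u = emb i ⟨u, hu⟩ := by subst hu; rfl
  refine ⟨idx, fun u v huv h => ?_⟩
  rw [hidx u (P u) rfl, hidx v (P u) huv.symm] at h
  exact congrArg Subtype.val ((emb (P u)).injective h)

theorem eq_or_eq_neg_of_span_singleton_eq_of_norm_eq {E : Type*} [NormedAddCommGroup E]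
    [NormedSpace ℝ E] {x y : E} (hspan : (ℝ ∙ x) = ℝ ∙ y) (hnorm : ‖x‖ = ‖y‖) : x = y ∨ x = -y := by
  obtain ⟨a, rfl⟩ :=
    Submodule.mem_span_singleton.1 (hspan ▸ Submodule.mem_span_singleton_self x)
  rcases eq_or_ne y 0 with rfl | hy
  · simp
  rw [norm_smul, Real.norm_eq_abs, mul_eq_right₀ (norm_ne_zero_iff.2 hy)] at hnorm
  rcases (abs_eq zero_le_one).1 hnorm with rfl | rfl <;> simp

theorem exists_rep_up_to_sign (E : Type*) [NormedAddCommGroup E] [NormedSpace ℝ E] :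
    ∃ ρ : Submodule ℝ E × ℝ → E, ∀ t, ρ (ℝ ∙ t, ‖t‖) = t ∨ ρ (ℝ ∙ t, ‖t‖) = -t := by
  refine ⟨invFun fun t : E => (ℝ ∙ t, ‖t‖), fun t => ?_⟩
  have h := invFun_eq (⟨t, rfl⟩ : ∃ s : E, (ℝ ∙ s, ‖s‖) = (ℝ ∙ t, ‖t‖))
  exact eq_or_eq_neg_of_span_singleton_eq_of_norm_eq (congrArg Prod.fst h) (congrArg Prod.snd h)

theorem IsPrimitiveRoot.exists_norm_pow_sub_pow_eq {ζ : ℂ} {n : ℕ} (hζ : IsPrimitiveRoot ζ n)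
    {a b : ℕ} (ha : a < n) (hb : b < n) (hab : a ≠ b) :
    ∃ k ∈ Finset.Icc 1 (n / 2), ‖ζ ^ a - ζ ^ b‖ = ‖ζ ^ k - 1‖ := by
  have h1 (m : ℕ) : ‖ζ ^ m‖ = 1 := by rw [norm_pow, hζ.norm'_eq_one (by omega), one_pow]
  wlog hba : b < a generalizing a b
  · rw [norm_sub_rev]
    exact this hb ha hab.symm (by omega)
  obtain ⟨d, rfl⟩ : ∃ d, a = b + d := ⟨a - b, by omega⟩
  have hd : ‖ζ ^ (b + d) - ζ ^ b‖ = ‖ζ ^ d - 1‖ := by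
    rw [pow_add, ← mul_sub_one, norm_mul, h1, one_mul]
  by_cases hdn : d ≤ n / 2
  · exact ⟨d, Finset.mem_Icc.2 ⟨by omega, hdn⟩, hd⟩
  -- the chord to `ζ ^ d` has the same length as the chord to its conjugate `ζ ^ (n - d)`
  have hconj : ζ ^ (n - d) - 1 = ζ ^ (n - d) * (1 - ζ ^ d) := by
    rw [mul_one_sub, ← pow_add, Nat.sub_add_cancel (by omega), hζ.pow_eq_one]
  refine ⟨n - d, Finset.mem_Icc.2 ⟨by omega, by omega⟩, ?_⟩
  rw [hd, hconj, norm_mul, h1, one_mul, norm_sub_rev]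

theorem Complex.exists_im_mul_ne_zero {K : Set ℂ} (hK : K.Finite) (hK0 : 0 ∉ K) :
    ∃ ω : ℂ, ω ≠ 0 ∧ ∀ k ∈ K, (k * ω).im ≠ 0 := by
  -- `ω = 1 + m I` works for all but finitely many `m`: `(k * ω).im = k.im + m * k.re` is a
  -- nonconstant or nonzero affine function of `m`.
  have hbad (k : ℂ) (hk : k ∈ K) : {m : ℕ | (k * (1 + m * I)).im = 0}.Subsingleton := by
    intro m₁ h₁ m₂ h₂
    simp only [mem_ofPred_eq, mul_im, add_re, one_re, mul_re, natCast_re, I_re, mul_zero,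
      natCast_im, I_im, mul_one, sub_self, add_zero, add_im, one_im, zero_add] at h₁ h₂
    by_contra hne
    have hre : k.re = 0 := by
      have : ((m₁ : ℝ) - m₂) * k.re = 0 := by linarith
      exact (mul_eq_zero.1 this).resolve_left (sub_ne_zero.2 (by exact_mod_cast hne))
    have hk0 : k = 0 := Complex.ext hre (by simpa [hre] using h₁)
    exact hK0 (hk0 ▸ hk)
  obtain ⟨m, -, hm⟩ :=
    (infinite_univ.sdiff (hK.biUnion fun k hk => (hbad k hk).finite)).nonempty
  refine ⟨1 + m * I, fun h => by simpa using congrArg re h, fun k hk hzero => hm ?_⟩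
  exact mem_biUnion hk hzero

section BlowUp

variable {V W ι E : Type*} [NormedAddCommGroup E] [NormedSpace ℝ E]

def blowUp (b : W → E) (P : V → W) (c : ι → E) (idx : V → ι) (ε : ℝ) (u : V) : E :=
  b (P u) + ε • c (idx u)

variable {H : SimpleGraph W} {G : SimpleGraph V} {b : W → E} {P : V → W} {c : ι → E}
  {idx : V → ι} {β : E →ₗ[ℝ] E →ₗ[ℝ] ℝ} {r : ℝ}

theorem blowUp_sub_blowUp (ε : ℝ) (u v : V) :
    blowUp b P c idx ε v - blowUp b P c idx ε u
      = (b (P v) - b (P u)) + ε • (c (idx v) - c (idx u)) := by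
  simp only [blowUp, smul_sub]
  abel

theorem blowUp_sub_blowUp_of_eq (ε : ℝ) {u v : V} (h : P u = P v) :
    blowUp b P c idx ε v - blowUp b P c idx ε u = ε • (c (idx v) - c (idx u)) := by
  rw [blowUp_sub_blowUp, h, sub_self, zero_add]

theorem tendsto_blowUp (u : V) :
    Tendsto (fun ε => blowUp b P c idx ε u) (𝓝[>] 0) (𝓝 (b (P u))) := by
  have : Continuous fun ε : ℝ => blowUp b P c idx ε u :=
    continuous_const.add (continuous_id.smul continuous_const)
  exact (this.tendsto' 0 _ (by simp [blowUp])).mono_left nhdsWithin_le_nhds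

theorem eventually_blowUp_ne (hb : Injective b) (hc : Injective c)
    (hidx : ∀ u v, P u = P v → idx u = idx v → u = v) {u v : V} (huv : u ≠ v) :
    ∀ᶠ ε in 𝓝[>] 0, blowUp b P c idx ε u ≠ blowUp b P c idx ε v := by
  by_cases hP : P u = P v
  · filter_upwards [self_mem_nhdsWithin] with ε (hε : 0 < ε)
    rw [Ne, eq_comm, ← sub_eq_zero, blowUp_sub_blowUp_of_eq ε hP, smul_eq_zero, sub_eq_zero]
    exact not_or.2 ⟨hε.ne', fun h => huv (hidx u v hP (hc h.symm))⟩
  · filter_upwards [((tendsto_blowUp u).sub (tendsto_blowUp v)).eventually_ne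
      (sub_ne_zero.2 (hb.ne hP))] with ε hε
    exact sub_ne_zero.1 hε

theorem eventually_blowUp_notMem_openSegment_of_notMem_segment [StrictConvexSpace ℝ E]
    {u v x : V} (h : b (P x) ∉ segment ℝ (b (P u)) (b (P v))) :
    ∀ᶠ ε in 𝓝[>] 0,
      blowUp b P c idx ε x ∉ openSegment ℝ (blowUp b P c idx ε u) (blowUp b P c idx ε v) := by
  have hlim :
      dist (b (P u)) (b (P x)) + dist (b (P x)) (b (P v)) ≠ dist (b (P u)) (b (P v)) := by
    rwa [Ne, dist_add_dist_eq_iff, ← mem_segment_iff_wbtw]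
  have hF (w : V) : Tendsto (fun ε => blowUp b P c idx ε w) (𝓝[>] 0) (𝓝 (b (P w))) :=
    tendsto_blowUp w
  have hsum := (((hF u).dist (hF x)).add ((hF x).dist (hF v))).sub ((hF u).dist (hF v))
  filter_upwards [hsum.eventually_ne (sub_ne_zero.2 hlim)] with ε hε hmem
  exact hε <| sub_eq_zero.2 <|
    dist_add_dist_of_mem_segment (openSegment_subset_segment _ _ _ hmem)

theorem eventually_blowUp_notMem_openSegment_of_same_part [StrictConvexSpace ℝ E]
    (hb : Injective b) (hc : Injective c) (hidx : ∀ u v, P u = P v → idx u = idx v → u = v)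
    (hr : ∀ a, ‖c a‖ = r) {u v x : V} (huv : u ≠ v) (hv : P v = P u) (hx : P x = P u) :
    ∀ᶠ ε in 𝓝[>] 0,
      blowUp b P c idx ε x ∉ openSegment ℝ (blowUp b P c idx ε u) (blowUp b P c idx ε v) := by
  filter_upwards [eventually_blowUp_ne hb hc hidx huv, self_mem_nhdsWithin]
    with ε hne (hε : 0 < ε) hmem
  have hdist {w : V} (hw : P w = P u) : dist (blowUp b P c idx ε w) (b (P u)) = ε * r := by
    rw [blowUp, hw, dist_eq_norm, add_sub_cancel_left, norm_smul, hr,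
      Real.norm_of_nonneg hε.le]
  have := openSegment_subset_ball_of_ne (Metric.mem_closedBall.2 (hdist rfl).le)
    (Metric.mem_closedBall.2 (hdist hv).le) hne hmem
  exact (Metric.mem_ball.1 this).ne (hdist hx)

theorem eventually_blowUp_notMem_openSegment_of_transversal (hβ : β.IsAlt) {u v x : V}
    (hx : P x = P u) (hβ₀ : β (b (P v) - b (P u)) (c (idx x) - c (idx u)) ≠ 0) :
    ∀ᶠ ε in 𝓝[>] 0,
      blowUp b P c idx ε x ∉ openSegment ℝ (blowUp b P c idx ε u) (blowUp b P c idx ε v) := by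
  set t := b (P v) - b (P u)
  set d := c (idx v) - c (idx u)
  set a := c (idx x) - c (idx u)
  have hlim : Tendsto (fun ε => β t a + ε * β d a) (𝓝[>] 0) (𝓝 (β t a)) := by
    have : Continuous fun ε : ℝ => β t a + ε * β d a := by fun_prop
    exact (this.tendsto' 0 _ (by simp)).mono_left nhdsWithin_le_nhds
  filter_upwards [hlim.eventually_ne hβ₀, self_mem_nhdsWithin] with ε hne (hε : 0 < ε) hmem
  rw [openSegment_eq_image'] at hmem
  obtain ⟨θ, -, hθ⟩ := hmem
  have hθ' : ε • a = θ • (t + ε • d) := by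
    rw [← blowUp_sub_blowUp_of_eq ε hx.symm, ← hθ, ← blowUp_sub_blowUp, add_sub_cancel_left]
  have : ε * (β t a + ε * β d a) = 0 := by
    calc ε * (β t a + ε * β d a) = β (t + ε • d) (ε • a) := by
          simp only [map_add, map_smul, LinearMap.add_apply, LinearMap.smul_apply, smul_eq_mul]
      _ = 0 := by rw [hθ', map_smul, hβ.self_eq_zero, smul_zero]
  exact hne ((mul_eq_zero.1 this).resolve_left hε.ne')

theorem eventually_blowUp_notMem_openSegment [StrictConvexSpace ℝ E] (hβ : β.IsAlt)
    (hb : Injective b) (hb_seg : ∀ i j k, H.Adj i j → b k ∉ openSegment ℝ (b i) (b j))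
    (hGH : ∀ u v, G.Adj u v → P u ≠ P v → H.Adj (P u) (P v))
    (hidx : ∀ u v, P u = P v → idx u = idx v → u = v) (hc : Injective c) (hr : ∀ a, ‖c a‖ = r)
    (hβc : ∀ i j, H.Adj i j → ∀ a a', a ≠ a' → β (b j - b i) (c a' - c a) ≠ 0)
    {u v x : V} (huv : G.Adj u v) :
    ∀ᶠ ε in 𝓝[>] 0,
      blowUp b P c idx ε x ∉ openSegment ℝ (blowUp b P c idx ε u) (blowUp b P c idx ε v) := by
  rcases eq_or_ne x u with rfl | hxu
  · filter_upwards [eventually_blowUp_ne hb hc hidx huv.ne] with ε hne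
    rwa [left_mem_openSegment_iff]
  rcases eq_or_ne x v with rfl | hxv
  · filter_upwards [eventually_blowUp_ne hb hc hidx huv.ne] with ε hne
    rwa [right_mem_openSegment_iff]
  by_cases hP : P u = P v
  · by_cases hx : P x = P u
    · exact eventually_blowUp_notMem_openSegment_of_same_part hb hc hidx hr huv.ne hP.symm hx
    · refine eventually_blowUp_notMem_openSegment_of_notMem_segment ?_
      rw [← hP, segment_same, mem_singleton_iff]
      exact hb.ne hx
  have hH := hGH u v huv hP
  by_cases hxu' : P x = P u
  · exact eventually_blowUp_notMem_openSegment_of_transversal hβ hxu'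
      (hβc _ _ hH _ _ fun h => hxu (hidx x u hxu' h.symm))
  by_cases hxv' : P x = P v
  · simp_rw [openSegment_symm ℝ (blowUp b P c idx _ u)]
    exact eventually_blowUp_notMem_openSegment_of_transversal hβ hxv'
      (hβc _ _ hH.symm _ _ fun h => hxv (hidx x v hxv' h.symm))
  exact eventually_blowUp_notMem_openSegment_of_notMem_segment fun hseg => hb_seg _ _ _ hH
    (mem_openSegment_of_ne_left_right (hb.ne (Ne.symm hxu')) (hb.ne (Ne.symm hxv')) hseg)

theorem eventually_blowUp_isDrawing [Finite V] [StrictConvexSpace ℝ E] (hβ : β.IsAlt)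
    (hb : Injective b) (hb_seg : ∀ i j k, H.Adj i j → b k ∉ openSegment ℝ (b i) (b j))
    (hGH : ∀ u v, G.Adj u v → P u ≠ P v → H.Adj (P u) (P v))
    (hidx : ∀ u v, P u = P v → idx u = idx v → u = v) (hc : Injective c) (hr : ∀ a, ‖c a‖ = r)
    (hβc : ∀ i j, H.Adj i j → ∀ a a', a ≠ a' → β (b j - b i) (c a' - c a) ≠ 0) :
    ∀ᶠ ε in 𝓝[>] 0, Injective (blowUp b P c idx ε) ∧ ∀ u v x, G.Adj u v →
      blowUp b P c idx ε x ∉ openSegment ℝ (blowUp b P c idx ε u) (blowUp b P c idx ε v) := by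
  refine Eventually.and ?_ ?_
  · have : ∀ᶠ ε in 𝓝[>] 0, ∀ u v, u ≠ v → blowUp b P c idx ε u ≠ blowUp b P c idx ε v := by
      simp only [eventually_all]
      exact fun u v => eventually_blowUp_ne hb hc hidx
    exact this.mono fun ε h u v huv => by_contra fun hne => h u v hne huv
  · simp only [eventually_all]
    exact fun u v x huv =>
      eventually_blowUp_notMem_openSegment hβ hb hb_seg hGH hidx hc hr hβc huv

end BlowUp

def chordLengths {ι E : Type*} [SeminormedAddCommGroup E] (c : ι → E) : Set ℝ :=
  {d | ∃ a b, a ≠ b ∧ ‖c a - c b‖ = d}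

theorem chordLengths_finite {ι E : Type*} [Finite ι] [SeminormedAddCommGroup E] (c : ι → E) :
    (chordLengths c).Finite :=
  (finite_range fun p : ι × ι => ‖c p.1 - c p.2‖).subset fun _ ⟨a, b, _, h⟩ => ⟨(a, b), h⟩

theorem chordLengths_comp_linearIsometryEquiv {ι E F : Type*} [NormedAddCommGroup E]
    [NormedAddCommGroup F] [NormedSpace ℝ E] [NormedSpace ℝ F] (e : E ≃ₗᵢ[ℝ] F) (c : ι → E) :
    chordLengths (e ∘ c) = chordLengths c := by
  simp only [chordLengths, comp_apply, ← map_sub, LinearIsometryEquiv.norm_map]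

theorem IsPrimitiveRoot.ncard_chordLengths_le {ζ : ℂ} {n : ℕ} (hζ : IsPrimitiveRoot ζ n)
    (ω : ℂ) : (chordLengths fun a : Fin n => ω * ζ ^ (a : ℕ)).ncard ≤ n / 2 := by
  have hsub : (chordLengths fun a : Fin n => ω * ζ ^ (a : ℕ)) ⊆
      (fun k => ‖ω‖ * ‖ζ ^ k - 1‖) '' (Finset.Icc 1 (n / 2) : Set ℕ) := by
    rintro _ ⟨a, b, hab, rfl⟩
    obtain ⟨k, hk, hnorm⟩ := hζ.exists_norm_pow_sub_pow_eq a.isLt b.isLt (Fin.val_ne_of_ne hab)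
    exact ⟨k, hk, by simp only [← mul_sub, norm_mul, hnorm]⟩
  calc _ ≤ _ := ncard_le_ncard hsub ((Finset.finite_toSet _).image _)
    _ ≤ (Finset.Icc 1 (n / 2) : Set ℕ).ncard := ncard_image_le (Finset.finite_toSet _)
    _ = n / 2 := by simp

theorem SimpleGraph.edgeLengths_finite_s15 {V : Type*} [Finite V] (G : SimpleGraph V)
    (f : V → Plane) : (G.edgeLengths f).Finite :=
  (finite_range fun p : V × V => Dist.dist (f p.1) (f p.2)).subset fun _ ⟨u, v, _, h⟩ => ⟨(u, v), h⟩

theorem SimpleGraph.edgeSlopes_finite {V : Type*} [Finite V] (G : SimpleGraph V)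
    (f : V → Plane) : (G.edgeSlopes f).Finite :=
  (finite_range fun p : V × V => ℝ ∙ (f p.2 - f p.1)).subset
    fun _ ⟨u, v, _, h⟩ => ⟨(u, v), h.symm⟩

theorem SimpleGraph.ncard_edgeLengths_blowUp_le {V W ι : Type*} [Finite W] [Fintype ι]
    {H : SimpleGraph W} {G : SimpleGraph V} (g : W → Plane) {P : V → W} (c : ι → Plane)
    {idx : V → ι}
    (hGH : ∀ u v, G.Adj u v → P u ≠ P v → H.Adj (P u) (P v))
    (hidx : ∀ u v, P u = P v → idx u = idx v → u = v) (ε : ℝ) :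
    (G.edgeLengths (blowUp g P c idx ε)).ncard ≤
      (H.edgeSlopes g).ncard * (H.edgeLengths g).ncard * (Fintype.card ι * (Fintype.card ι - 1))
        + (chordLengths c).ncard + (H.edgeLengths g).ncard := by
  classical
  obtain ⟨ρ, hρ⟩ := exists_rep_up_to_sign Plane
  set pairs : Set (ι × ι) := ↑(Finset.univ.offDiag : Finset (ι × ι))
  -- the lengths `‖t + ε • (c a' - c a)‖` of edges between parts, with `t = ± ρ (ℝ ∙ t, ‖t‖)`
  set A := (fun p : (Submodule ℝ Plane × ℝ) × (ι × ι) => ‖ρ p.1 + ε • (c p.2.2 - c p.2.1)‖) ''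
    ((H.edgeSlopes g ×ˢ H.edgeLengths g) ×ˢ pairs)
  have hAfin : ((H.edgeSlopes g ×ˢ H.edgeLengths g) ×ˢ pairs).Finite :=
    ((H.edgeSlopes_finite g).prod (H.edgeLengths_finite_s15 g)).prod (Finset.finite_toSet _)
  have hsub : G.edgeLengths (blowUp g P c idx ε) ⊆
      A ∪ (fun d => |ε| * d) '' chordLengths c ∪ H.edgeLengths g := by
    rintro _ ⟨u, v, huv, rfl⟩
    rw [_root_.dist_comm, _root_.dist_eq_norm, blowUp_sub_blowUp]
    by_cases hP : P u = P v
    · refine Or.inl (Or.inr ⟨_, ⟨idx v, idx u, fun h => huv.ne (hidx u v hP h.symm), rfl⟩, ?_⟩)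
      rw [hP, sub_self, zero_add, norm_smul, Real.norm_eq_abs]
    have hH := hGH u v huv hP
    by_cases hi : idx u = idx v
    · refine Or.inr ⟨P v, P u, hH.symm, ?_⟩
      rw [hi, sub_self, smul_zero, add_zero, _root_.dist_eq_norm]
    set t := g (P v) - g (P u)
    have hmem : (ℝ ∙ t, ‖t‖) ∈ H.edgeSlopes g ×ˢ H.edgeLengths g :=
      ⟨⟨P u, P v, hH, rfl⟩, ⟨P v, P u, hH.symm, _root_.dist_eq_norm _ _⟩⟩
    refine Or.inl (Or.inl ?_)
    rcases hρ t with h | h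
    · exact ⟨((ℝ ∙ t, ‖t‖), (idx u, idx v)), ⟨hmem, by simpa [pairs] using hi⟩, by simp only [h]⟩
    · refine ⟨((ℝ ∙ t, ‖t‖), (idx v, idx u)), ⟨hmem, by simpa [pairs] using Ne.symm hi⟩, ?_⟩
      simp only [h]
      rw [← norm_neg, neg_add, neg_neg, ← smul_neg, neg_sub]
  have hA : A.ncard ≤ (H.edgeSlopes g).ncard * (H.edgeLengths g).ncard *
      (Fintype.card ι * (Fintype.card ι - 1)) := by
    calc A.ncard ≤ ((H.edgeSlopes g ×ˢ H.edgeLengths g) ×ˢ pairs).ncard := ncard_image_le hAfin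
      _ = _ := by
        rw [ncard_prod, ncard_prod, ncard_coe_finset, Finset.offDiag_card, Finset.card_univ,
          Nat.mul_sub_one]
  have hfin : (A ∪ (fun d => |ε| * d) '' chordLengths c ∪ H.edgeLengths g).Finite :=
    ((hAfin.image _).union ((chordLengths_finite c).image _)).union (H.edgeLengths_finite_s15 g)
  calc _ ≤ (A ∪ (fun d => |ε| * d) '' chordLengths c ∪ H.edgeLengths g).ncard :=
        ncard_le_ncard hsub hfin
    _ ≤ A.ncard + ((fun d => |ε| * d) '' chordLengths c).ncard + (H.edgeLengths g).ncard :=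
        (ncard_union_le _ _).trans (Nat.add_le_add_right (ncard_union_le _ _) _)
    _ ≤ _ := Nat.add_le_add_right (Nat.add_le_add hA (ncard_image_le (chordLengths_finite c))) _

open ComplexConjugate Real

attribute [local instance] Complex.finrank_real_complex_fact

def planeEquiv : ℂ ≃ₗᵢ[ℝ] Plane := Complex.orthonormalBasisOneI.repr

def planeAreaForm : Plane →ₗ[ℝ] Plane →ₗ[ℝ] ℝ :=
  Complex.orientation.areaForm.compl₁₂ planeEquiv.symm.toLinearEquiv.toLinearMap
    planeEquiv.symm.toLinearEquiv.toLinearMap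

theorem planeAreaForm_apply (x y : Plane) :
    planeAreaForm x y = (conj (planeEquiv.symm x) * planeEquiv.symm y).im := by
  simp [planeAreaForm, Complex.areaForm]

theorem planeAreaForm_isAlt : planeAreaForm.IsAlt := fun x => by
  simp [planeAreaForm]

theorem exists_regularPolygon_transversal {n : ℕ} (hn : n ≠ 0) {T : Set Plane} (hT : T.Finite)
    (hT0 : 0 ∉ T) :
    ∃ c : Fin n → Plane, Injective c ∧ (∃ r, ∀ a, ‖c a‖ = r) ∧ (chordLengths c).ncard ≤ n / 2 ∧
      ∀ t ∈ T, ∀ a b, a ≠ b → planeAreaForm t (c b - c a) ≠ 0 := by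
  set ζ := exp (2 * π * I / n)
  have hζ : IsPrimitiveRoot ζ n := Complex.isPrimitiveRoot_exp n hn
  have hpow {a b : Fin n} (h : ζ ^ (a : ℕ) = ζ ^ (b : ℕ)) : a = b :=
    Fin.ext (hζ.pow_inj a.isLt b.isLt h)
  set D := (fun p : Fin n × Fin n => ζ ^ (p.2 : ℕ) - ζ ^ (p.1 : ℕ)) '' {p | p.1 ≠ p.2}
  set K := image2 (fun t d => conj (planeEquiv.symm t) * d) T D
  have hK0 : 0 ∉ K := by
    rintro ⟨t, ht, _, ⟨⟨a, b⟩, hab, rfl⟩, h⟩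
    rcases mul_eq_zero.1 h with h | h
    · exact hT0 ((show t = 0 by simpa using h) ▸ ht)
    · exact hab (hpow (sub_eq_zero.1 h)).symm
  obtain ⟨ω, hω, hωK⟩ := exists_im_mul_ne_zero (hT.image2 _ (toFinite D)) hK0
  refine ⟨fun a => planeEquiv (ω * ζ ^ (a : ℕ)), fun a b h => ?_, ⟨‖ω‖, fun a => ?_⟩, ?_, ?_⟩
  · exact hpow (mul_left_cancel₀ hω (planeEquiv.injective h))
  · simp [hζ.norm'_eq_one hn]
  · rw [← comp_def planeEquiv, chordLengths_comp_linearIsometryEquiv]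
    exact hζ.ncard_chordLengths_le ω
  · intro t ht a b hab
    rw [planeAreaForm_apply, ← map_sub, LinearIsometryEquiv.symm_apply_apply, ← mul_sub,
      mul_left_comm, mul_comm]
    exact hωK _ (mem_image2_of_mem ht ⟨(a, b), hab, rfl⟩)

theorem stmt15_general {V W : Type*} [Fintype V] [Fintype W]
    (H : SimpleGraph W) (G : SimpleGraph V) (s ℓ w : ℕ)
    (hw : 1 ≤ w)
    (g : W → Plane) (hg : H.IsDrawing g)
    (hslope : (H.edgeSlopes g).ncard ≤ s) (hlen : (H.edgeLengths g).ncard ≤ ℓ)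
    (P : V → W)
    (hH : ∀ i j : W, i ≠ j →
      (H.Adj i j ↔ ∃ u v : V, G.Adj u v ∧ P u = i ∧ P v = j))
    (hwidth : ∀ i : W, (P ⁻¹' {i}).ncard ≤ w) :
    G.dn ≤ s * ℓ * w * (w - 1) + w / 2 + ℓ := by
  have hGH (u v : V) (huv : G.Adj u v) (hP : P u ≠ P v) : H.Adj (P u) (P v) :=
    (hH _ _ hP).2 ⟨u, v, huv, rfl, rfl⟩
  obtain ⟨idx, hidx⟩ := exists_index_injOn_fibers P hwidth
  set T := (fun p : W × W => g p.2 - g p.1) '' {p | H.Adj p.1 p.2}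
  have hT0 : 0 ∉ T := fun ⟨_, hp, h⟩ => hp.ne (hg.1 (sub_eq_zero.1 h).symm)
  obtain ⟨c, hc, ⟨r, hr⟩, hchords, hcT⟩ :=
    exists_regularPolygon_transversal (by omega : w ≠ 0) (toFinite T) hT0
  obtain ⟨ε, hdraw⟩ := (eventually_blowUp_isDrawing planeAreaForm_isAlt hg.1 hg.2 hGH hidx hc hr
    fun i j hij => hcT _ ⟨(i, j), hij, rfl⟩).exists
  calc G.dn ≤ (G.edgeLengths (blowUp g P c idx ε)).ncard := Nat.sInf_le ⟨_, hdraw, rfl⟩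
    _ ≤ _ := SimpleGraph.ncard_edgeLengths_blowUp_le g c hGH hidx ε
    _ ≤ s * ℓ * w * (w - 1) + w / 2 + ℓ := by
      rw [Fintype.card_fin, ← mul_assoc]
      gcongr

/-- Let `H` be a graph with a drawing having at most `s` distinct
edge-slopes and at most `ℓ` distinct edge-lengths (`s, ℓ ≥ 1`). If `G` admits an
`H`-partition of width `w ≥ 1`, then `dn G ≤ s·ℓ·w·(w−1) + ⌊w/2⌋ + ℓ`. -/
theorem stmt15 {V W : Type*} [Fintype V] [Fintype W]
    (H : SimpleGraph W) (G : SimpleGraph V) (s ℓ w : ℕ)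
    (hs : 1 ≤ s) (hℓ : 1 ≤ ℓ) (hw : 1 ≤ w)
    (g : W → Plane) (hg : H.IsDrawing g)
    (hslope : (H.edgeSlopes g).ncard ≤ s) (hlen : (H.edgeLengths g).ncard ≤ ℓ)
    (P : V → W) (hPsurj : Function.Surjective P)
    (hH : ∀ i j : W, i ≠ j →
      (H.Adj i j ↔ ∃ u v : V, G.Adj u v ∧ P u = i ∧ P v = j))
    (hwidth : ∀ i : W, (P ⁻¹' {i}).ncard ≤ w) :
    G.dn ≤ s * ℓ * w * (w - 1) + w / 2 + ℓ :=
  stmt15_general H G s ℓ w hw g hg hslope hlen P hH hwidth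
end
end

section
/- Let G be a graph admitting a P-partition of width k ≥ 1 for some path P. Then the distance-number of G satisfies dn(G) ≤ k·(k − 1/2) + 1. -/
/-! Number the vertices part by part, giving each part a block of `k` consecutive integers; since
the parts form a path, adjacent vertices receive numbers at most `2k - 1` apart. Put the vertex
numbered `n` at angle `n` on the unit circle. As `π` is irrational these points are distinct, no
point of a circle lies strictly inside a chord, and the chord between angles `a` and `b` depends
only on `|a - b|`; so at most `2k - 1 ≤ k(k - 1/2) + 1` edge-lengths occur. -/

noncomputable section

open Function

def circlePoint (n : ℤ) : Plane := Complex.orthonormalBasisOneI.repr (Circle.exp n)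

lemma norm_circlePoint (n : ℤ) : ‖circlePoint n‖ = 1 := by
  rw [circlePoint, LinearIsometryEquiv.norm_map, Circle.norm_coe]

lemma circlePoint_injective : Injective circlePoint := by
  intro a b h
  obtain ⟨n, hn⟩ :=
    Circle.exp_eq_exp.1 (Subtype.ext (Complex.orthonormalBasisOneI.repr.injective h))
  by_contra hab
  have hn0 : 2 * n ≠ 0 := by
    rintro h0
    apply hab
    exact_mod_cast (show (a : ℝ) = b by simpa [show n = 0 by omega] using hn)
  exact (irrational_pi.mul_intCast hn0).ne_int (a - b) (by push_cast; linarith)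

lemma dist_circlePoint (a b : ℤ) :
    dist (circlePoint a) (circlePoint b) = dist (circlePoint (a - b)) (circlePoint 0) := by
  have hrot : (Circle.exp a : ℂ) - Circle.exp b =
      (Circle.exp ↑(a - b) - Circle.exp ↑(0 : ℤ)) * Circle.exp b := by
    rw [sub_mul, ← Circle.coe_mul, ← Circle.coe_mul, ← Circle.exp_add, ← Circle.exp_add]
    push_cast
    ring_nf
  simp only [circlePoint, LinearIsometryEquiv.dist_map]
  rw [dist_eq_norm, dist_eq_norm, hrot, norm_mul, Circle.norm_coe, mul_one]

theorem exists_injective_prod_fin_of_ncard_fiber_le {V ι : Type*} [Finite V] (P : V → ι)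
    {k : ℕ} (h : ∀ i, (P ⁻¹' {i}).ncard ≤ k) : ∃ j : V → Fin k, Injective fun v => (P v, j v) := by
  classical
  have := Fintype.ofFinite V
  have e : ∀ i, {v // P v = i} ↪ Fin k := fun i =>
    (Function.Embedding.nonempty_of_card_le (by
      rw [Fintype.card_eq_nat_card, Fintype.card_fin]
      exact (Nat.card_coe_set_eq _).trans_le (h i))).some
  refine ⟨fun v => e (P v) ⟨v, rfl⟩, ?_⟩
  exact (Equiv.sigmaEquivProd _ _).injective.comp
    ((injective_id.sigma_map fun i => (e i).injective).comp (Equiv.sigmaFiberEquiv P).symm.injective)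

lemma SimpleGraph.isDrawing_of_injective_of_norm_eq_one {V : Type*} (G : SimpleGraph V)
    {f : V → Plane} (hf : Injective f) (hnorm : ∀ v, ‖f v‖ = 1) : G.IsDrawing f := by
  refine ⟨hf, fun u v w huv hw => ?_⟩
  have := openSegment_subset_ball_of_ne (z := 0) (r := 1) (by simp [hnorm]) (by simp [hnorm])
    (hf.ne huv.ne) hw
  simp [hnorm] at this

theorem SimpleGraph.dn_le_of_injective_of_adj_abs_sub_le {V : Type*} (G : SimpleGraph V)
    {m : V → ℤ} (hm : Injective m) {b : ℕ} (hadj : ∀ u v, G.Adj u v → |m u - m v| ≤ b) :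
    G.dn ≤ b := by
  set f := circlePoint ∘ m
  have hdraw : G.IsDrawing f := G.isDrawing_of_injective_of_norm_eq_one
    (circlePoint_injective.comp hm) fun _ => norm_circlePoint _
  set D : ℕ → ℝ := fun d => Dist.dist (circlePoint d) (circlePoint 0)
  have hlen : G.edgeLengths f ⊆ (Finset.Icc 1 b).image D := by
    have hdesc : ∀ u v, G.Adj u v → m v < m u →
        Dist.dist (f u) (f v) ∈ (Finset.Icc 1 b).image D := by
      intro u v huv hlt
      have := abs_le.1 (hadj u v huv)
      refine Finset.mem_image.2 ⟨(m u - m v).toNat, Finset.mem_Icc.2 ⟨by omega, by omega⟩, ?_⟩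
      simp [D, f, dist_circlePoint (m u), Int.toNat_of_nonneg (sub_nonneg.2 hlt.le)]
    rintro _ ⟨u, v, huv, rfl⟩
    rcases lt_or_gt_of_ne (hm.ne huv.ne) with h | h
    · rw [_root_.dist_comm]
      exact hdesc v u huv.symm h
    · exact hdesc u v huv h
  calc G.dn ≤ (G.edgeLengths f).ncard := Nat.sInf_le ⟨f, hdraw, rfl⟩
    _ ≤ ((Finset.Icc 1 b).image D).card := by
      rw [← Set.ncard_coe_finset]
      exact Set.ncard_le_ncard hlen (Finset.finite_toSet _)
    _ ≤ (Finset.Icc 1 b).card := Finset.card_image_le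
    _ = b := by simp

lemma abs_add_mul_sub_add_mul_le {j j' a a' k : ℤ} (hj : j ∈ Set.Ico 0 k)
    (hj' : j' ∈ Set.Ico 0 k) (ha : |a - a'| ≤ 1) : |(j + k * a) - (j' + k * a')| ≤ 2 * k - 1 := by
  obtain ⟨hj0, hjk⟩ := hj
  obtain ⟨hj0', hjk'⟩ := hj'
  calc |(j + k * a) - (j' + k * a')| = |(j - j') + k * (a - a')| := by ring_nf
    _ ≤ |j - j'| + |k * (a - a')| := abs_add_le _ _
    _ = |j - j'| + k * |a - a'| := by rw [abs_mul, abs_of_nonneg (by omega : 0 ≤ k)]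
    _ ≤ (k - 1) + k * 1 := add_le_add (by rw [abs_sub_le_iff]; omega) (by gcongr; omega)
    _ = 2 * k - 1 := by ring

theorem stmt16_general {V : Type*} [Fintype V] (G : SimpleGraph V) (k t : ℕ)
    (P : V → Fin t)
    (hH : ∀ i j : Fin t, i ≠ j →
      ((SimpleGraph.pathGraph t).Adj i j ↔ ∃ u v : V, G.Adj u v ∧ P u = i ∧ P v = j))
    (hwidth : ∀ i : Fin t, (P ⁻¹' {i}).ncard ≤ k) :
    (G.dn : ℝ) ≤ (k : ℝ) * ((k : ℝ) - 1 / 2) + 1 := by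
  obtain ⟨j, hj⟩ := exists_injective_prod_fin_of_ncard_fiber_le P hwidth
  have hslot : ∀ v, ((j v : ℕ) : ℤ) ∈ Set.Ico 0 (k : ℤ) :=
    fun v => ⟨by positivity, by exact_mod_cast (j v).isLt⟩
  have hparts : ∀ u v, G.Adj u v → |((P u : ℕ) : ℤ) - (P v : ℕ)| ≤ 1 := by
    intro u v huv
    by_cases h : P u = P v
    · simp [h]
    · have := (hH _ _ h).2 ⟨u, v, huv, rfl, rfl⟩
      rw [SimpleGraph.pathGraph_adj] at this
      rw [abs_le]
      omega
  have hdn : G.dn ≤ 2 * k - 1 := by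
    refine G.dn_le_of_injective_of_adj_abs_sub_le (m := fun v => (finProdFinEquiv (P v, j v) : ℕ))
      (Nat.cast_injective.comp (Fin.val_injective.comp (finProdFinEquiv.injective.comp hj)))
      fun u v huv => ?_
    have := abs_add_mul_sub_add_mul_le (hslot u) (hslot v) (hparts u v huv)
    have := (j u).isLt
    simp only [finProdFinEquiv_apply_val]
    push_cast
    omega
  calc (G.dn : ℝ) ≤ (2 * k - 1 : ℕ) := by exact_mod_cast hdn
    _ ≤ (k : ℝ) * ((k : ℝ) - 1 / 2) + 1 := by
      rcases k with _ | k
      · norm_num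
      · rw [show 2 * (k + 1) - 1 = 2 * k + 1 by omega]
        push_cast
        nlinarith [sq_nonneg ((k : ℝ) - 1 / 4)]

/-- If `G` admits a `P`-partition of width `k ≥ 1` for some path `P`,
then `dn G ≤ k·(k − 1/2) + 1`. -/
theorem stmt16 {V : Type*} [Fintype V] (G : SimpleGraph V) (k t : ℕ) (hk : 1 ≤ k)
    (P : V → Fin t) (hPsurj : Function.Surjective P)
    (hH : ∀ i j : Fin t, i ≠ j →
      ((SimpleGraph.pathGraph t).Adj i j ↔ ∃ u v : V, G.Adj u v ∧ P u = i ∧ P v = j))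
    (hwidth : ∀ i : Fin t, (P ⁻¹' {i}).ncard ≤ k) :
    (G.dn : ℝ) ≤ (k : ℝ) * ((k : ℝ) - 1 / 2) + 1 :=
  stmt16_general G k t P hH hwidth
end
end

section
/- For every graph G, the distance-number satisfies dn(G) ≤ cbw(G) ≤ bw(G), where bw(G) is the bandwidth of G and cbw(G) is the cyclic bandwidth of G. -/
/-!
Place the vertices, in the order of an optimal cyclic ordering `σ`, at the vertices of a regular
`n`-gon. By strict convexity of the disc no point of a circle lies on a chord between two others,
so this is a drawing, and an edge `uv` becomes a chord spanning `m` sides, where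
`m = min (|σ u - σ v|, n - |σ u - σ v|)` lies in `[1, cbw G]`; hence at most `cbw G` lengths
occur. An optimal linear ordering has cyclic width at most its width, giving `cbw G ≤ bw G`.
-/

noncomputable section

/-- The bandwidth of `G`: the minimum over all vertex orderings `σ` of
`max {|σ(v) − σ(w)| : vw ∈ E(G)}` (taken to be `0` for an edgeless graph). -/
def bandwidth {V : Type*} [Fintype V] (G : SimpleGraph V) : ℕ :=
  sInf {k : ℕ | ∃ σ : V ≃ Fin (Fintype.card V),
    ∀ u v : V, G.Adj u v → (((σ u : ℕ) : ℤ) - ((σ v : ℕ) : ℤ)).natAbs ≤ k}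

/-- The cyclic bandwidth of `G`: the minimum over all vertex orderings `σ` of
`max {min {|σ(v) − σ(w)|, n − |σ(v) − σ(w)|} : vw ∈ E(G)}`. -/
def cyclicBandwidth {V : Type*} [Fintype V] (G : SimpleGraph V) : ℕ :=
  sInf {k : ℕ | ∃ σ : V ≃ Fin (Fintype.card V),
    ∀ u v : V, G.Adj u v →
      min (((σ u : ℕ) : ℤ) - ((σ v : ℕ) : ℤ)).natAbs
        (Fintype.card V - (((σ u : ℕ) : ℤ) - ((σ v : ℕ) : ℤ)).natAbs) ≤ k}

open Complex Real

section RootsOfUnity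

variable {𝕜 : Type*} [NormedDivisionRing 𝕜] {z : 𝕜}

theorem norm_pow_sub_pow_of_le (hz : ‖z‖ = 1) {i j : ℕ} (hji : j ≤ i) :
    ‖z ^ i - z ^ j‖ = ‖z ^ (i - j) - 1‖ := by
  rw [← Nat.sub_add_cancel hji, pow_add, ← sub_one_mul, norm_mul, norm_pow, hz, one_pow,
    mul_one, Nat.add_sub_cancel]

theorem norm_pow_sub_one_of_pow_eq_one {n a : ℕ} (hz : ‖z‖ = 1) (hzn : z ^ n = 1) (ha : a ≤ n) :
    ‖z ^ (n - a) - 1‖ = ‖z ^ a - 1‖ := by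
  rw [← norm_pow_sub_pow_of_le hz ha, hzn, norm_sub_rev]

theorem norm_pow_sub_pow_of_pow_eq_one {n : ℕ} (hz : ‖z‖ = 1) (hzn : z ^ n = 1) {i j : ℕ}
    (hi : i < n) (hj : j < n) :
    ‖z ^ i - z ^ j‖ =
      ‖z ^ min ((i : ℤ) - j).natAbs (n - ((i : ℤ) - j).natAbs) - 1‖ := by
  wlog hji : j ≤ i generalizing i j
  · rw [norm_sub_rev, this hj hi (by omega), ← Int.natAbs_neg, neg_sub]
  have hd : ((i : ℤ) - j).natAbs = i - j := by omega
  rw [hd, norm_pow_sub_pow_of_le hz hji]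
  rcases le_total (i - j) (n - (i - j)) with h | h
  · rw [min_eq_left h]
  · rw [min_eq_right h, norm_pow_sub_one_of_pow_eq_one hz hzn (by omega)]

end RootsOfUnity

theorem SimpleGraph.isDrawing_of_norm_eq {V : Type*} (G : SimpleGraph V) {f : V → Plane}
    {r : ℝ} (hf : Function.Injective f) (hr : ∀ v, ‖f v‖ = r) : G.IsDrawing f := by
  refine ⟨hf, fun u v w hadj ⟨a, b, ha, hb, hab, hw⟩ => ?_⟩
  have := norm_combo_lt_of_ne (hr u).le (hr v).le (hf.ne hadj.ne) ha hb hab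
  rw [hw, hr w] at this
  exact lt_irrefl r this

/-- The `i`-th vertex of the regular `n`-gon inscribed in the unit circle: `exp (2πi · i / n) ∈ ℂ`
transported to the plane along `ℂ ≃ₗᵢ[ℝ] ℝ²`. -/
def regularPolygon (n i : ℕ) : Plane :=
  orthonormalBasisOneI.repr (exp (2 * π * I / n) ^ i)

theorem norm_exp_two_pi_I_div (n : ℕ) : ‖exp (2 * π * I / n)‖ = 1 := by
  rw [show 2 * π * I / n = ((2 * π / n : ℝ) : ℂ) * I by push_cast; ring, norm_exp_ofReal_mul_I]

theorem norm_regularPolygon (n i : ℕ) : ‖regularPolygon n i‖ = 1 := by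
  rw [regularPolygon, LinearIsometryEquiv.norm_map, norm_pow, norm_exp_two_pi_I_div, one_pow]

theorem regularPolygon_injOn (n : ℕ) : Set.InjOn (regularPolygon n) (Set.Iio n) :=
  fun _ hi _ hj h =>
    (isPrimitiveRoot_exp n (Nat.ne_zero_of_lt hi)).pow_inj hi hj
      (orthonormalBasisOneI.repr.injective h)

theorem dist_regularPolygon {n i j : ℕ} (hi : i < n) (hj : j < n) :
    dist (regularPolygon n i) (regularPolygon n j) =
      dist (regularPolygon n (min ((i : ℤ) - j).natAbs (n - ((i : ℤ) - j).natAbs)))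
        (regularPolygon n 0) := by
  simp only [regularPolygon, LinearIsometryEquiv.dist_map]
  rw [dist_eq_norm, dist_eq_norm, pow_zero]
  exact norm_pow_sub_pow_of_pow_eq_one (norm_exp_two_pi_I_div n)
    ((isPrimitiveRoot_exp n (by omega)).pow_eq_one) hi hj

theorem SimpleGraph.dn_le_of_cyclicWidth_le {V : Type*} [Fintype V] (G : SimpleGraph V) {k : ℕ}
    (σ : V ≃ Fin (Fintype.card V))
    (hσ : ∀ u v : V, G.Adj u v →
      min (((σ u : ℕ) : ℤ) - ((σ v : ℕ) : ℤ)).natAbs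
        (Fintype.card V - (((σ u : ℕ) : ℤ) - ((σ v : ℕ) : ℤ)).natAbs) ≤ k) :
    G.dn ≤ k := by
  let f : V → Plane := fun v => regularPolygon (Fintype.card V) (σ v)
  have hinj : Function.Injective f := fun u v h =>
    σ.injective (Fin.ext (regularPolygon_injOn _ (σ u).isLt (σ v).isLt h))
  have hlengths : G.edgeLengths f ⊆
      (fun m => Dist.dist (regularPolygon (Fintype.card V) m)
        (regularPolygon (Fintype.card V) 0)) '' Set.Icc 1 k := by
    rintro _ ⟨u, v, hadj, rfl⟩
    have hne : (σ u : ℕ) ≠ σ v := fun h => hadj.ne (σ.injective (Fin.ext h))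
    have hu := (σ u).isLt
    have hv := (σ v).isLt
    exact ⟨_, ⟨by omega, hσ u v hadj⟩, (dist_regularPolygon hu hv).symm⟩
  calc G.dn ≤ (G.edgeLengths f).ncard :=
        Nat.sInf_le ⟨f, G.isDrawing_of_norm_eq hinj fun v => norm_regularPolygon _ _, rfl⟩
    _ ≤ (Set.Icc 1 k).ncard :=
        (Set.ncard_le_ncard hlengths ((Set.finite_Icc 1 k).image _)).trans
          (Set.ncard_image_le (Set.finite_Icc 1 k))
    _ = k := by simp

section Bandwidth

variable {V : Type*} [Fintype V] (G : SimpleGraph V)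

theorem exists_width_le_bandwidth : ∃ σ : V ≃ Fin (Fintype.card V),
    ∀ u v : V, G.Adj u v → (((σ u : ℕ) : ℤ) - ((σ v : ℕ) : ℤ)).natAbs ≤ bandwidth G :=
  (Nat.sInf_mem ⟨Fintype.card V, Fintype.equivFin V, fun u v _ => by
    have := (Fintype.equivFin V u).isLt
    have := (Fintype.equivFin V v).isLt
    omega⟩ : bandwidth G ∈ _)

theorem exists_cyclicWidth_le_cyclicBandwidth : ∃ σ : V ≃ Fin (Fintype.card V),
    ∀ u v : V, G.Adj u v →
      min (((σ u : ℕ) : ℤ) - ((σ v : ℕ) : ℤ)).natAbs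
        (Fintype.card V - (((σ u : ℕ) : ℤ) - ((σ v : ℕ) : ℤ)).natAbs) ≤ cyclicBandwidth G :=
  (Nat.sInf_mem ⟨Fintype.card V, Fintype.equivFin V, fun _ _ _ => (min_le_right _ _).trans
    (Nat.sub_le _ _)⟩ : cyclicBandwidth G ∈ _)

theorem cyclicBandwidth_le_bandwidth : cyclicBandwidth G ≤ bandwidth G :=
  let ⟨σ, hσ⟩ := exists_width_le_bandwidth G
  Nat.sInf_le ⟨σ, fun u v h => (min_le_left _ _).trans (hσ u v h)⟩

theorem SimpleGraph.dn_le_cyclicBandwidth : G.dn ≤ cyclicBandwidth G :=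
  let ⟨σ, hσ⟩ := exists_cyclicWidth_le_cyclicBandwidth G
  G.dn_le_of_cyclicWidth_le σ hσ

end Bandwidth

/-- For every graph `G`, `dn G ≤ cbw G ≤ bw G`. -/
theorem stmt17 {V : Type*} [Fintype V] (G : SimpleGraph V) :
    G.dn ≤ cyclicBandwidth G ∧ cyclicBandwidth G ≤ bandwidth G :=
  ⟨G.dn_le_cyclicBandwidth, cyclicBandwidth_le_bandwidth G⟩
end
end
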